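/- arXiv:2009.08479 — 6 statements merged into one kernel-verified Lean document; each statement's English description precedes it below -/
import Mathlib

section
/- There is a constant c > 0 such that the following holds. For every finite simple graph G = (V, E) with n ≥ 2 vertices and m edges, there is a partition of V into nonempty disjoint sets V₁, …, V_k such that Σ_{i=1}^{k} δ_G(V_i) ≤ m/2 and, for every 1 ≤ i ≤ k, the induced subgraph G[V_i] is a strong (c/log₂ n)-expander with respect to G. -/
/-!
Split recursively along sparse cuts. If `G[W]` is not a strong `φ`-expander, some `S ⊆ W` has
fewer than `φ · min (vol S, vol (W \ S))` crossing edges; recurse on `S` and `W \ S`. Charging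
each such cut to the smaller side, the potential `2φ · vol · log₂ vol` pays for all cut edges,
since `min a b + a log₂ a + b log₂ b ≤ (a + b) log₂ (a + b)`. For the whole graph
`vol = 2m ≤ n²`, so with `φ = c / log₂ n` this gives `Σᵢ δ(Vᵢ) ≤ 8cm`, which is `m / 2` for
`c = 1/16`.
-/

open Finset
open scoped Classical

noncomputable section

universe u

variable {V : Type*} [Fintype V]

def gdeg (G : SimpleGraph V) (v : V) : ℕ :=
  (Finset.univ.filter fun u => G.Adj v u).card

def gvol (G : SimpleGraph V) (S : Finset V) : ℕ := ∑ v ∈ S, gdeg G v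

def gcut (G : SimpleGraph V) (S : Finset V) : ℕ :=
  (Finset.univ.filter fun p : V × V => p.1 ∈ S ∧ p.2 ∉ S ∧ G.Adj p.1 p.2).card

/-- The boundary `δ_{G[W]}(S)` of `S ⊆ W` in the induced subgraph `G[W]`. -/
def gcutIn (G : SimpleGraph V) (W S : Finset V) : ℕ :=
  (Finset.univ.filter fun p : V × V =>
    p.1 ∈ S ∧ p.2 ∈ W ∧ p.2 ∉ S ∧ G.Adj p.1 p.2).card

def edgeCount (G : SimpleGraph V) : ℕ :=
  (Finset.univ.filter fun p : V × V => G.Adj p.1 p.2).card / 2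

def IsStrongInducedExpanderWrt (G : SimpleGraph V) (W : Finset V) (φ : ℝ) : Prop :=
  ∀ S ⊆ W, S.Nonempty → (W \ S).Nonempty →
    φ * min (gvol G S : ℝ) (gvol G (W \ S) : ℝ) ≤ (gcutIn G W S : ℝ)

namespace Finpartition

variable {α : Type*} [DecidableEq α] {s t : Finset α}

@[simps]
def disjUnion (P : Finpartition s) (Q : Finpartition t) (hst : Disjoint s t) :
    Finpartition (s ∪ t) where
  parts := P.parts ∪ Q.parts
  supIndep := by
    rw [Finset.supIndep_iff_pairwiseDisjoint, coe_union]
    refine P.disjoint.union Q.disjoint fun p hp q hq _ => ?_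
    exact hst.mono (P.le hp) (Q.le hq)
  sup_parts := by rw [sup_union, P.sup_parts, Q.sup_parts, sup_eq_union]
  bot_notMem := by simp

theorem sum_disjUnion_parts {M : Type*} [AddCommMonoid M] (P : Finpartition s)
    (Q : Finpartition t) (hst : Disjoint s t) (f : Finset α → M) :
    ∑ p ∈ (P.disjUnion Q hst).parts, f p = ∑ p ∈ P.parts, f p + ∑ q ∈ Q.parts, f q := by
  refine sum_union (disjoint_left.2 fun p hp hq => ?_)
  obtain ⟨x, hx⟩ := P.nonempty_of_mem_parts hp
  exact disjoint_left.1 hst (P.le hp hx) (Q.le hq hx)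

end Finpartition

section Cuts

variable (G : SimpleGraph V)

theorem gcutIn_eq_card_interedges (W S : Finset V) :
    gcutIn G W S = #(G.interedges S (W \ S)) := by
  rw [gcutIn, SimpleGraph.interedges_def]
  congr 1
  ext ⟨a, b⟩
  simp [and_assoc]

theorem gcut_eq_gcutIn_univ (S : Finset V) : gcut G S = gcutIn G univ S := by
  simp [gcut, gcutIn]

theorem gcutIn_self (W : Finset V) : gcutIn G W W = 0 := by
  simp +contextual [gcutIn]

theorem gcutIn_sdiff {W S : Finset V} (hSW : S ⊆ W) : gcutIn G W (W \ S) = gcutIn G W S := by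
  rw [gcutIn_eq_card_interedges, gcutIn_eq_card_interedges, Finset.sdiff_sdiff_eq_self hSW]
  have := G.symm
  exact Rel.card_interedges_comm _ _

theorem sum_gcutIn_parts_of_subset {s W : Finset V} (hsW : s ⊆ W) (P : Finpartition s) :
    ∑ p ∈ P.parts, gcutIn G W p = ∑ p ∈ P.parts, gcutIn G s p + gcutIn G W s := by
  have hsplit : ∀ p ∈ P.parts,
      gcutIn G W p = gcutIn G s p + #(G.interedges p (W \ s)) := by
    intro p hp
    have hW : W \ p = (s \ p) ∪ (W \ s) := by
      rw [union_comm, sdiff_union_sdiff_cancel hsW (P.le hp)]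
    rw [gcutIn_eq_card_interedges, gcutIn_eq_card_interedges, hW, ← card_union_of_disjoint]
    · simp only [SimpleGraph.interedges_def, product_union, filter_union]
    · exact G.interedges_disjoint_right _ (disjoint_sdiff.mono_left sdiff_subset)
  rw [sum_congr rfl hsplit, sum_add_distrib, gcutIn_eq_card_interedges]
  congr 1
  exact (Rel.card_interedges_finpartition_left _ P _).symm

theorem sum_gcutIn_disjUnion_parts {W S : Finset V} (hSW : S ⊆ W) (P₁ : Finpartition S)
    (P₂ : Finpartition (W \ S)) :
    ∑ p ∈ (P₁.disjUnion P₂ disjoint_sdiff).parts, gcutIn G W p =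
      ∑ p ∈ P₁.parts, gcutIn G S p + ∑ p ∈ P₂.parts, gcutIn G (W \ S) p + 2 * gcutIn G W S := by
  rw [Finpartition.sum_disjUnion_parts, sum_gcutIn_parts_of_subset G hSW,
    sum_gcutIn_parts_of_subset G sdiff_subset, gcutIn_sdiff G hSW]
  ring

end Cuts

section Volumes

variable (G : SimpleGraph V)

theorem gvol_univ_eq_two_mul_edgeCount : gvol G univ = 2 * edgeCount G := by
  have hpairs : #(univ.filter fun p : V × V => G.Adj p.1 p.2) = gvol G univ := by
    rw [card_filter, ← univ_product_univ, sum_product, gvol]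
    exact sum_congr rfl fun v _ => (card_filter _ _).symm
  have hdegrees : gvol G univ = 2 * #G.edgeFinset := by
    rw [gvol, ← G.sum_degrees_eq_twice_card_edges]
    refine sum_congr rfl fun v _ => ?_
    rw [gdeg, ← G.card_neighborFinset_eq_degree]
    congr 1
    ext u
    simp
  rw [edgeCount, hpairs, hdegrees]
  omega

theorem gvol_le_card_mul_card (S : Finset V) : gvol G S ≤ #S * Fintype.card V := by
  rw [← smul_eq_mul]
  exact sum_le_card_nsmul _ _ _ fun v _ => card_filter_le _ _

theorem gvol_eq_gvol_add_gvol_sdiff {W S : Finset V} (hSW : S ⊆ W) :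
    gvol G W = gvol G S + gvol G (W \ S) := by
  rw [gvol, gvol, gvol, ← sum_sdiff hSW, add_comm]

end Volumes

theorem min_add_mul_logb_add_mul_logb_le {a b : ℝ} (ha : 0 < a) (hb : 0 < b) :
    min a b + a * Real.logb 2 a + b * Real.logb 2 b ≤ (a + b) * Real.logb 2 (a + b) := by
  wlog hab : a ≤ b generalizing a b
  · have := this hb ha (le_of_not_ge hab)
    rw [min_comm, add_comm b a] at this
    linarith
  -- `a ≤ (a + b) / 2`, so the smaller side gains a full bit: `log₂ a ≤ log₂ (a + b) - 1`.
  have hsmall : Real.logb 2 a ≤ Real.logb 2 (a + b) - 1 := by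
    rw [← Real.logb_self_eq_one one_lt_two, ← Real.logb_div (by positivity) two_ne_zero]
    exact Real.logb_le_logb_of_le one_lt_two ha (by linarith)
  have hlarge : Real.logb 2 b ≤ Real.logb 2 (a + b) :=
    Real.logb_le_logb_of_le one_lt_two hb (by linarith)
  calc min a b + a * Real.logb 2 a + b * Real.logb 2 b
      ≤ a + a * (Real.logb 2 (a + b) - 1) + b * Real.logb 2 (a + b) := by
        gcongr
        exact min_le_left a b
    _ = (a + b) * Real.logb 2 (a + b) := by ring

theorem mul_logb_le_mul_logb {b x y : ℝ} (hb : 1 < b) (hx : 0 ≤ x) (hxy : x ≤ y) :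
    x * Real.logb b x ≤ x * Real.logb b y := by
  rcases hx.eq_or_lt with rfl | hx
  · simp
  · exact mul_le_mul_of_nonneg_left (Real.logb_le_logb_of_le hb hx hxy) hx.le

theorem exists_finpartition_isStrongInducedExpanderWrt (G : SimpleGraph V) {φ : ℝ} (hφ : 0 ≤ φ)
    (W : Finset V) :
    ∃ P : Finpartition W, (∀ p ∈ P.parts, IsStrongInducedExpanderWrt G p φ) ∧
      (∑ p ∈ P.parts, (gcutIn G W p : ℝ)) ≤
        2 * φ * gvol G W * Real.logb 2 (gvol G W) := by
  induction W using Finset.strongInduction with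
  | H W ih =>
  rcases W.eq_empty_or_nonempty with rfl | hW
  · exact ⟨Finpartition.empty _, by simp, by simp [gvol]⟩
  by_cases hexp : IsStrongInducedExpanderWrt G W φ
  · refine ⟨Finpartition.indiscrete hW.ne_empty, by simpa using hexp, ?_⟩
    simp only [Finpartition.indiscrete_parts, sum_singleton, gcutIn_self, Nat.cast_zero]
    exact mul_nonneg (by positivity)
      (div_nonneg (Real.log_natCast_nonneg _) (Real.log_nonneg one_le_two))
  simp only [IsStrongInducedExpanderWrt, not_forall, not_le, exists_prop] at hexp
  obtain ⟨S, hSW, hS, hWS, hsparse⟩ := hexp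
  have hmin : 0 < min (gvol G S : ℝ) (gvol G (W \ S)) :=
    pos_of_mul_pos_right ((Nat.cast_nonneg _).trans_lt hsparse) hφ
  obtain ⟨P₁, hP₁, hsum₁⟩ := ih S (hSW.ssubset_of_not_subset (sdiff_nonempty.1 hWS))
  obtain ⟨P₂, hP₂, hsum₂⟩ := ih (W \ S) (sdiff_ssubset hSW hS)
  let P := (P₁.disjUnion P₂ disjoint_sdiff).copy (union_sdiff_of_subset hSW)
  refine ⟨P, fun p hp => ?_, ?_⟩
  · simp only [P, Finpartition.copy_parts, Finpartition.disjUnion_parts, mem_union] at hp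
    exact hp.elim (hP₁ p) (hP₂ p)
  have hsplit := min_add_mul_logb_add_mul_logb_le (lt_min_iff.1 hmin).1 (lt_min_iff.1 hmin).2
  rw [← Nat.cast_sum, Finpartition.copy_parts, sum_gcutIn_disjUnion_parts G hSW, gvol_eq_gvol_add_gvol_sdiff G hSW]
  push_cast
  calc _ ≤ 2 * φ * (min (gvol G S : ℝ) (gvol G (W \ S)) + gvol G S * Real.logb 2 (gvol G S) +
        gvol G (W \ S) * Real.logb 2 (gvol G (W \ S))) := by
        linarith
    _ ≤ _ := by
        rw [mul_assoc _ (_ + _ : ℝ)]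
        exact mul_le_mul_of_nonneg_left hsplit (by positivity)

/-- There is a constant `c > 0` such that every finite simple graph `G` with `n ≥ 2`
vertices and `m` edges admits a partition of its vertex set into nonempty parts
`V₁, …, V_k` with `Σᵢ δ_G(Vᵢ) ≤ m/2`, each part inducing a strong
`(c / log₂ n)`-expander with respect to `G`. -/
theorem statement3 :
    ∃ c : ℝ, 0 < c ∧
      ∀ (V : Type u) [Fintype V] (G : SimpleGraph V),
        2 ≤ Fintype.card V →
        ∃ P : Finpartition (Finset.univ : Finset V),
          (∑ p ∈ P.parts, (gcut G p : ℝ)) ≤ (edgeCount G : ℝ) / 2 ∧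
          ∀ p ∈ P.parts,
            IsStrongInducedExpanderWrt G p (c / Real.logb 2 (Fintype.card V)) := by
  refine ⟨1 / 16, by norm_num, fun V _ G hn => ?_⟩
  set n := Fintype.card V
  have hlogn : 1 ≤ Real.logb 2 n := by
    rw [← Real.logb_self_eq_one one_lt_two]
    exact Real.logb_le_logb_of_le one_lt_two two_pos (by exact_mod_cast hn)
  obtain ⟨P, hexp, hcut⟩ := exists_finpartition_isStrongInducedExpanderWrt G
    (φ := 1 / 16 / Real.logb 2 n) (by positivity) univ
  refine ⟨P, ?_, hexp⟩
  have hvol : (gvol G univ : ℝ) = 2 * edgeCount G := by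
    exact_mod_cast gvol_univ_eq_two_mul_edgeCount G
  have hlogvol : (gvol G univ : ℝ) * Real.logb 2 (gvol G univ) ≤
      gvol G univ * (2 * Real.logb 2 n) := by
    rw [show 2 * Real.logb 2 n = Real.logb 2 ((n : ℝ) ^ 2) by simp [Real.logb_pow]]
    refine mul_logb_le_mul_logb one_lt_two (Nat.cast_nonneg _) ?_
    exact_mod_cast (gvol_le_card_mul_card G univ).trans_eq (by rw [card_univ, sq])
  simp_rw [gcut_eq_gcutIn_univ]
  calc _ ≤ 2 * (1 / 16 / Real.logb 2 n) * gvol G univ * Real.logb 2 (gvol G univ) := hcut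
    _ ≤ 2 * (1 / 16 / Real.logb 2 n) * (gvol G univ * (2 * Real.logb 2 n)) := by
        rw [mul_assoc]
        gcongr
    _ = edgeCount G / 2 := by
        rw [hvol]
        field_simp
        ring
end
end

section
/- There is a constant c > 0 such that the following holds. Let H be a finite simple graph with n ≥ 2 vertices in which every vertex has degree at least h, where h ≥ 1 is an integer, and set φ = c/log₂ n. Then there is a collection F of vertex-disjoint induced subgraphs of H (called cores) such that: every K ∈ F is a φ-expander; every vertex u ∈ V(K) of every K ∈ F satisfies deg_K(u) ≥ φ·h; and Σ_{K∈F} |E(K)| ≥ (3/4)·|E(H)|. -/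
open Finset
open scoped Classical

noncomputable section

universe u

variable {V : Type*} [Fintype V]

/-- The degree of the vertex `v` in the induced subgraph `G[W]`:
the number of `G`-neighbors of `v` inside `W`. -/
def gdegIn (G : SimpleGraph V) (W : Finset V) (v : V) : ℕ :=
  (W.filter fun u => G.Adj v u).card

/-- The volume of `S` in the induced subgraph `G[W]`. -/
def gvolIn (G : SimpleGraph V) (W S : Finset V) : ℕ := ∑ v ∈ S, gdegIn G W v

/-- The number of edges of the induced subgraph `G[W]`. -/
def edgeCountIn (G : SimpleGraph V) (W : Finset V) : ℕ :=
  (Finset.univ.filter fun p : V × V => p.1 ∈ W ∧ p.2 ∈ W ∧ G.Adj p.1 p.2).card / 2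

/-- The induced subgraph `G[W]` is a `φ`-expander: for every partition `(S, W \ S)`
of `W` into two nonempty sets, the number of crossing edges of `G[W]` is at least
`φ` times the minimum of the volumes (in `G[W]`) of the two sides. -/
def IsInducedExpander (G : SimpleGraph V) (W : Finset V) (φ : ℝ) : Prop :=
  ∀ S ⊆ W, S.Nonempty → (W \ S).Nonempty →
    φ * min (gvolIn G W S : ℝ) (gvolIn G W (W \ S) : ℝ) ≤ (gcutIn G W S : ℝ)

-- helpers

lemma gdegIn_eq_sum (G : SimpleGraph V) (A : Finset V) (v : V) :
    gdegIn G A v = ∑ u ∈ A, if G.Adj v u then 1 else 0 :=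
  Finset.card_filter _ _

lemma gdegIn_mono (G : SimpleGraph V) {A B : Finset V} (h : A ⊆ B) (v : V) :
    gdegIn G A v ≤ gdegIn G B v :=
  Finset.card_le_card (Finset.filter_subset_filter _ h)

lemma gvolIn_mono (G : SimpleGraph V) {A B S T : Finset V} (h : A ⊆ B) (hS : S ⊆ T) :
    gvolIn G A S ≤ gvolIn G B T := by
  calc gvolIn G A S ≤ ∑ v ∈ S, gdegIn G B v :=
        Finset.sum_le_sum fun v _ => gdegIn_mono G h v
    _ ≤ gvolIn G B T := Finset.sum_le_sum_of_subset hS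

lemma gcutIn_eq_sum (G : SimpleGraph V) (W S : Finset V) :
    gcutIn G W S = ∑ v ∈ S, gdegIn G (W \ S) v := by
  unfold gcutIn
  rw [Finset.card_filter, Fintype.sum_prod_type]
  have h1 : ∀ v u : V, (if (v ∈ S ∧ u ∈ W ∧ u ∉ S ∧ G.Adj v u) then (1:ℕ) else 0)
      = (if v ∈ S then (if u ∈ W \ S then (if G.Adj v u then 1 else 0) else 0) else 0) := by
    intro v u
    simp only [Finset.mem_sdiff]
    split_ifs <;> simp_all
  simp only [h1, Finset.sum_ite_irrel, Finset.sum_const_zero]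
  rw [← Finset.sum_filter, Finset.filter_univ_mem]
  refine Finset.sum_congr rfl fun v _ => ?_
  rw [← Finset.sum_filter, Finset.filter_univ_mem, gdegIn_eq_sum]

lemma gdegIn_union (G : SimpleGraph V) {A B : Finset V} (h : Disjoint A B) (v : V) :
    gdegIn G (A ∪ B) v = gdegIn G A v + gdegIn G B v := by
  unfold gdegIn
  rw [Finset.filter_union, Finset.card_union_of_disjoint]
  exact Finset.disjoint_filter_filter h

lemma gvolIn_split (G : SimpleGraph V) {W S : Finset V} (hS : S ⊆ W) :
    gvolIn G W S = gvolIn G S S + gcutIn G W S := by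
  rw [gcutIn_eq_sum]
  unfold gvolIn
  rw [← Finset.sum_add_distrib]
  refine Finset.sum_congr rfl fun v _ => ?_
  rw [← gdegIn_union G Finset.disjoint_sdiff v, Finset.union_sdiff_of_subset hS]

lemma sum_symm_adj (G : SimpleGraph V) (A B : Finset V) :
    (∑ v ∈ A, gdegIn G B v) = ∑ v ∈ B, gdegIn G A v := by
  simp only [gdegIn_eq_sum]
  rw [Finset.sum_comm]
  refine Finset.sum_congr rfl fun v _ => Finset.sum_congr rfl fun u _ => ?_
  simp [SimpleGraph.adj_comm]

lemma gcutIn_symm (G : SimpleGraph V) {W S : Finset V} (hS : S ⊆ W) :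
    gcutIn G W (W \ S) = gcutIn G W S := by
  rw [gcutIn_eq_sum, gcutIn_eq_sum]
  rw [Finset.sdiff_sdiff_eq_self hS]
  exact sum_symm_adj G (W \ S) S

lemma gvolIn_top_split (G : SimpleGraph V) {W S : Finset V} (hS : S ⊆ W) :
    gvolIn G W W = gvolIn G W S + gvolIn G W (W \ S) := by
  unfold gvolIn
  rw [← Finset.sum_union Finset.disjoint_sdiff, Finset.union_sdiff_of_subset hS]

lemma edgeCountIn_card (G : SimpleGraph V) (W : Finset V) :
    (Finset.univ.filter fun p : V × V => p.1 ∈ W ∧ p.2 ∈ W ∧ G.Adj p.1 p.2).card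
      = gvolIn G W W := by
  rw [Finset.card_filter, Fintype.sum_prod_type]
  have h1 : ∀ v u : V, (if (v ∈ W ∧ u ∈ W ∧ G.Adj v u) then (1:ℕ) else 0)
      = (if v ∈ W then (if u ∈ W then (if G.Adj v u then 1 else 0) else 0) else 0) := by
    intro v u; split_ifs <;> simp_all
  simp only [h1, Finset.sum_ite_irrel, Finset.sum_const_zero]
  rw [← Finset.sum_filter, Finset.filter_univ_mem]
  refine Finset.sum_congr rfl fun v _ => ?_
  rw [← Finset.sum_filter, Finset.filter_univ_mem, gdegIn_eq_sum]

lemma edgeCountIn_eq (G : SimpleGraph V) (W : Finset V) :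
    edgeCountIn G W = gvolIn G W W / 2 := by
  rw [edgeCountIn, edgeCountIn_card]

lemma sym_sum_insert (d : V → V → ℕ) (hsym : ∀ v u, d v u = d u v)
    (hdiag : ∀ v, d v v = 0) {x : V} {A : Finset V} (hx : x ∉ A) :
    ∑ v ∈ insert x A, ∑ u ∈ insert x A, d v u
      = 2 * (∑ u ∈ A, d x u) + ∑ v ∈ A, ∑ u ∈ A, d v u := by
  rw [Finset.sum_insert hx]
  simp only [Finset.sum_insert hx, hdiag, zero_add]
  rw [Finset.sum_add_distrib]
  have : (∑ v ∈ A, d v x) = ∑ v ∈ A, d x v := Finset.sum_congr rfl fun v _ => hsym v x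
  rw [this]; ring

lemma gvolIn_self_eq_double (G : SimpleGraph V) (W : Finset V) :
    gvolIn G W W = ∑ v ∈ W, ∑ u ∈ W, if G.Adj v u then 1 else 0 := by
  exact Finset.sum_congr rfl fun v _ => gdegIn_eq_sum G W v

lemma even_gvolIn_self (G : SimpleGraph V) (W : Finset V) :
    Even (gvolIn G W W) := by
  rw [gvolIn_self_eq_double]
  induction W using Finset.induction with
  | empty => simp
  | @insert x A hx ih =>
    rw [sym_sum_insert _ (fun v u => by simp [SimpleGraph.adj_comm])
      (fun v => by simp) hx]
    exact (even_two_mul _).add ih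

lemma gvolIn_erase (G : SimpleGraph V) {W : Finset V} {v : V} (hv : v ∈ W) :
    gvolIn G W W = 2 * gdegIn G (W.erase v) v + gvolIn G (W.erase v) (W.erase v) := by
  rw [gvolIn_self_eq_double, gvolIn_self_eq_double]
  conv_lhs => rw [← Finset.insert_erase hv]
  rw [sym_sum_insert _ (fun a b => by simp [SimpleGraph.adj_comm])
    (fun a => by simp) (Finset.notMem_erase v W)]
  rw [gdegIn_eq_sum]

lemma edgeCountIn_erase (G : SimpleGraph V) {W : Finset V} {v : V} (hv : v ∈ W) :
    edgeCountIn G W = edgeCountIn G (W.erase v) + gdegIn G (W.erase v) v := by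
  rw [edgeCountIn_eq, edgeCountIn_eq, gvolIn_erase G hv]
  obtain ⟨k, hk⟩ := even_gvolIn_self G (W.erase v)
  omega

lemma edgeCountIn_split (G : SimpleGraph V) {W S : Finset V} (hS : S ⊆ W) :
    edgeCountIn G W = edgeCountIn G S + edgeCountIn G (W \ S) + gcutIn G W S := by
  have h1 : gvolIn G W W = gvolIn G S S + gvolIn G (W \ S) (W \ S) + 2 * gcutIn G W S := by
    rw [gvolIn_top_split G hS, gvolIn_split G hS,
      gvolIn_split G (Finset.sdiff_subset), gcutIn_symm G hS]
    ring
  rw [edgeCountIn_eq, edgeCountIn_eq, edgeCountIn_eq, h1]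
  obtain ⟨k, hk⟩ := even_gvolIn_self G S
  obtain ⟨l, hl⟩ := even_gvolIn_self G (W \ S)
  omega

lemma edgeCount_eq_univ (G : SimpleGraph V) :
    edgeCount G = edgeCountIn G univ := by
  unfold edgeCount edgeCountIn
  simp

/-- `Lf x = log₂ (max 2 x)`. -/
def Lf (x : ℕ) : ℝ := Real.logb 2 (max 2 (x : ℝ))

lemma one_le_Lf (x : ℕ) : 1 ≤ Lf x := by
  have h2 : Real.logb 2 2 = 1 := Real.logb_self_eq_one (by norm_num)
  calc (1:ℝ) = Real.logb 2 2 := h2.symm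
    _ ≤ Lf x := Real.logb_le_logb_of_le one_lt_two (by norm_num) (le_max_left _ _)

lemma Lf_nonneg (x : ℕ) : 0 ≤ Lf x := le_trans zero_le_one (one_le_Lf x)

lemma Lf_mono {x y : ℕ} (h : x ≤ y) : Lf x ≤ Lf y := by
  refine Real.logb_le_logb_of_le one_lt_two (by positivity) ?_
  exact max_le_max le_rfl (by exact_mod_cast h)

lemma Lf_eq_logb {x : ℕ} (h : 2 ≤ x) : Lf x = Real.logb 2 (x : ℝ) := by
  unfold Lf
  rw [max_eq_right (by exact_mod_cast h)]

lemma keyIneq (s t c : ℕ) (hs : Even s) (hst : s ≤ t) :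
    ((s + c : ℕ) : ℝ) + (s : ℝ) * Lf s + (t : ℝ) * Lf t
      ≤ ((s + t + 2 * c : ℕ) : ℝ) * Lf (s + t + 2 * c) := by
  push_cast
  have hL1 := one_le_Lf (s + t + 2 * c)
  have hLt : Lf t ≤ Lf (s + t + 2 * c) := Lf_mono (by omega)
  have htn : (0:ℝ) ≤ (t:ℝ) := by positivity
  rcases Nat.eq_zero_or_pos s with h0 | hpos
  · subst h0
    push_cast
    have hc : (0:ℝ) ≤ (c:ℝ) := by positivity
    have h1 : (t:ℝ) * Lf t ≤ (t:ℝ) * Lf (0 + t + 2*c) := by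
      push_cast; exact mul_le_mul_of_nonneg_left (by simpa using hLt) htn
    have h2 : (c:ℝ) ≤ 2*(c:ℝ) * Lf (0 + t + 2*c) := by
      have : (1:ℝ) ≤ Lf (0 + t + 2*c) := by simpa using hL1
      nlinarith
    simp only [Nat.zero_add, Nat.cast_add, Nat.cast_mul, Nat.cast_ofNat] at *
    nlinarith
  · have hs2 : 2 ≤ s := by
      rcases hs with ⟨k, hk⟩; omega
    have hTa : 2 * (s + c) ≤ s + t + 2 * c := by omega
    have hkey : 1 + Lf (s + c) ≤ Lf (s + t + 2 * c) := by
      have e1 : Lf (2 * (s + c)) = 1 + Lf (s + c) := by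
        rw [Lf_eq_logb (by omega), Lf_eq_logb (by omega)]
        push_cast
        rw [Real.logb_mul (by norm_num) (by positivity)]
        rw [Real.logb_self_eq_one (by norm_num)]
      rw [← e1]
      exact Lf_mono hTa
    have h1 : (s:ℝ) * Lf s ≤ ((s:ℝ) + c) * Lf (s + c) := by
      refine mul_le_mul ?_ (Lf_mono (by omega)) (Lf_nonneg s) (by positivity)
      · push_cast; linarith [Nat.cast_nonneg (α := ℝ) c]
    have h2 : (t:ℝ) * Lf t ≤ ((t:ℝ) + c) * Lf (s + t + 2 * c) := by
      refine mul_le_mul ?_ hLt (Lf_nonneg t) (by positivity)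
      · linarith [Nat.cast_nonneg (α := ℝ) c]
    have h3 : ((s:ℝ) + c) * (1 + Lf (s + c)) ≤ ((s:ℝ) + c) * Lf (s + t + 2 * c) :=
      mul_le_mul_of_nonneg_left hkey (by positivity)
    nlinarith [Lf_nonneg (s + c)]

lemma core (G : SimpleGraph V) (h : ℕ) (φ : ℝ) (hφ0 : 0 < φ) (hφ1 : φ ≤ 1) :
    ∀ n : ℕ, ∀ W : Finset V, W.card ≤ n →
      ∃ F : Finset (Finset V),
        (∀ K ∈ F, K ⊆ W ∧ K.Nonempty) ∧
        (∀ K ∈ F, ∀ K' ∈ F, K ≠ K' → Disjoint K K') ∧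
        (∀ K ∈ F, IsInducedExpander G K φ) ∧
        (∀ K ∈ F, ∀ u ∈ K, φ * (h : ℝ) ≤ (gdegIn G K u : ℝ)) ∧
        (edgeCountIn G W : ℝ) ≤ (∑ K ∈ F, (edgeCountIn G K : ℝ))
          + φ * (h : ℝ) * (W.card : ℝ)
          + φ * (gvolIn G W W : ℝ) * Lf (gvolIn G W W) := by
  intro n
  induction n with
  | zero =>
    intro W hW
    have hWe : W = ∅ := Finset.card_eq_zero.mp (Nat.le_zero.mp hW)
    subst hWe
    refine ⟨∅, by simp, by simp, by simp, by simp, ?_⟩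
    have h1 : edgeCountIn G (∅ : Finset V) = 0 := by
      rw [edgeCountIn_eq]; simp [gvolIn]
    have h2 : gvolIn G (∅ : Finset V) (∅ : Finset V) = 0 := by simp [gvolIn]
    rw [h1, h2]; simp
  | succ n IH =>
    intro W hW
    by_cases hWe : W = ∅
    · subst hWe
      refine ⟨∅, by simp, by simp, by simp, by simp, ?_⟩
      have h1 : edgeCountIn G (∅ : Finset V) = 0 := by
        rw [edgeCountIn_eq]; simp [gvolIn]
      have h2 : gvolIn G (∅ : Finset V) (∅ : Finset V) = 0 := by simp [gvolIn]
      rw [h1, h2]; simp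
    by_cases hdeg : ∃ v ∈ W, (gdegIn G W v : ℝ) < φ * (h : ℝ)
    · -- trim a low-degree vertex
      obtain ⟨v, hvW, hvdeg⟩ := hdeg
      have hcard : (W.erase v).card ≤ n := by
        have h1 := Finset.card_erase_of_mem hvW
        have h2 : 1 ≤ W.card := Finset.card_pos.mpr ⟨v, hvW⟩
        omega
      obtain ⟨F, hFsub, hFdisj, hFexp, hFdeg, hFsum⟩ := IH (W.erase v) hcard
      refine ⟨F, fun K hK => ⟨(hFsub K hK).1.trans (Finset.erase_subset _ _),
        (hFsub K hK).2⟩, hFdisj, hFexp, hFdeg, ?_⟩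
      have hE : (edgeCountIn G W : ℝ)
          = (edgeCountIn G (W.erase v) : ℝ) + (gdegIn G (W.erase v) v : ℝ) := by
        rw [edgeCountIn_erase G hvW]; push_cast; ring
      have hd' : (gdegIn G (W.erase v) v : ℝ) ≤ φ * (h : ℝ) := by
        refine le_of_lt (lt_of_le_of_lt ?_ hvdeg)
        exact_mod_cast gdegIn_mono G (Finset.erase_subset _ _) v
      have hvolm : gvolIn G (W.erase v) (W.erase v) ≤ gvolIn G W W :=
        gvolIn_mono G (Finset.erase_subset _ _) (Finset.erase_subset _ _)
      have hvol : φ * (gvolIn G (W.erase v) (W.erase v) : ℝ) * Lf (gvolIn G (W.erase v) (W.erase v))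
          ≤ φ * (gvolIn G W W : ℝ) * Lf (gvolIn G W W) := by
        rw [mul_assoc, mul_assoc]
        refine mul_le_mul_of_nonneg_left ?_ hφ0.le
        exact mul_le_mul (by exact_mod_cast hvolm) (Lf_mono hvolm) (Lf_nonneg _)
          (Nat.cast_nonneg _)
      have hcard' : ((W.erase v).card : ℝ) = (W.card : ℝ) - 1 := by
        rw [Finset.card_erase_of_mem hvW]
        have h2 : 1 ≤ W.card := Finset.card_pos.mpr ⟨v, hvW⟩
        push_cast [h2]; ring
      rw [hE]
      rw [hcard'] at hFsum
      linarith
    push_neg at hdeg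
    by_cases hexp : ∀ S ⊆ W, S.Nonempty → (W \ S).Nonempty →
        φ * min (gvolIn G W S : ℝ) (gvolIn G W (W \ S) : ℝ) ≤ (gcutIn G W S : ℝ)
    · -- W itself is a core
      refine ⟨{W}, ?_, ?_, ?_, ?_, ?_⟩
      · intro K hK
        rw [Finset.mem_singleton] at hK; subst hK
        exact ⟨le_refl _, Finset.nonempty_of_ne_empty hWe⟩
      · intro K hK K' hK' hne
        rw [Finset.mem_singleton] at hK hK'; subst hK; subst hK'; exact absurd rfl hne
      · intro K hK
        rw [Finset.mem_singleton] at hK; subst hK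
        exact hexp
      · intro K hK u hu
        rw [Finset.mem_singleton] at hK; subst hK
        exact hdeg u hu
      · rw [Finset.sum_singleton]
        have n1 : (0:ℝ) ≤ φ * (h : ℝ) * (W.card : ℝ) := by positivity
        have n2 : (0:ℝ) ≤ φ * (gvolIn G W W : ℝ) * Lf (gvolIn G W W) := by
          have := Lf_nonneg (gvolIn G W W); positivity
        linarith
    · -- split along a sparse cut
      push_neg at hexp
      obtain ⟨S₀, hS₀W, hS₀ne, hS₀ne', hS₀cut⟩ := hexp
      obtain ⟨S, hSW, hSne, hSne', hmin, hcut⟩ :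
          ∃ S, S ⊆ W ∧ S.Nonempty ∧ (W \ S).Nonempty ∧
            gvolIn G W S ≤ gvolIn G W (W \ S) ∧
            (gcutIn G W S : ℝ) < φ * (gvolIn G W S : ℝ) := by
        rcases le_total (gvolIn G W S₀) (gvolIn G W (W \ S₀)) with hle | hle
        · refine ⟨S₀, hS₀W, hS₀ne, hS₀ne', hle, ?_⟩
          rwa [min_eq_left (by exact_mod_cast hle)] at hS₀cut
        · refine ⟨W \ S₀, Finset.sdiff_subset, hS₀ne', ?_, ?_, ?_⟩
          · rwa [Finset.sdiff_sdiff_eq_self hS₀W]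
          · rw [Finset.sdiff_sdiff_eq_self hS₀W]; exact_mod_cast hle
          · rw [gcutIn_symm G hS₀W]
            calc (gcutIn G W S₀ : ℝ)
                < φ * min (gvolIn G W S₀ : ℝ) (gvolIn G W (W \ S₀) : ℝ) := hS₀cut
              _ = φ * (gvolIn G W (W \ S₀) : ℝ) := by
                  rw [min_eq_right (by exact_mod_cast hle)]
      have hcard1 : S.card ≤ n := by
        have : S ⊂ W := Finset.ssubset_iff_of_subset hSW |>.mpr
          (by obtain ⟨x, hx⟩ := hSne'; exact ⟨x, (Finset.mem_sdiff.mp hx).1,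
            (Finset.mem_sdiff.mp hx).2⟩)
        have := Finset.card_lt_card this
        omega
      have hcard2 : (W \ S).card ≤ n := by
        have : W \ S ⊂ W := Finset.ssubset_iff_of_subset Finset.sdiff_subset |>.mpr
          (by obtain ⟨x, hx⟩ := hSne; exact ⟨x, hSW hx, by simp [hx]⟩)
        have := Finset.card_lt_card this
        omega
      obtain ⟨F₁, h1sub, h1disj, h1exp, h1deg, h1sum⟩ := IH S hcard1
      obtain ⟨F₂, h2sub, h2disj, h2exp, h2deg, h2sum⟩ := IH (W \ S) hcard2
      have hcross : ∀ K ∈ F₁, ∀ K' ∈ F₂, Disjoint K K' := by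
        intro K hK K' hK'
        refine Finset.disjoint_of_subset_left (h1sub K hK).1 ?_
        refine Finset.disjoint_of_subset_right (h2sub K' hK').1 ?_
        exact Finset.disjoint_sdiff
      have hF12 : Disjoint F₁ F₂ := by
        rw [Finset.disjoint_left]
        intro K hK1 hK2
        obtain ⟨x, hx⟩ := (h1sub K hK1).2
        exact Finset.disjoint_left.mp (hcross K hK1 K hK2) hx hx
      refine ⟨F₁ ∪ F₂, ?_, ?_, ?_, ?_, ?_⟩
      · intro K hK
        rcases Finset.mem_union.mp hK with hK | hK
        · exact ⟨(h1sub K hK).1.trans hSW, (h1sub K hK).2⟩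
        · exact ⟨(h2sub K hK).1.trans Finset.sdiff_subset, (h2sub K hK).2⟩
      · intro K hK K' hK' hne
        rcases Finset.mem_union.mp hK with hK | hK <;>
          rcases Finset.mem_union.mp hK' with hK' | hK'
        · exact h1disj K hK K' hK' hne
        · exact hcross K hK K' hK'
        · exact (hcross K' hK' K hK).symm
        · exact h2disj K hK K' hK' hne
      · intro K hK
        rcases Finset.mem_union.mp hK with hK | hK
        · exact h1exp K hK
        · exact h2exp K hK
      · intro K hK
        rcases Finset.mem_union.mp hK with hK | hK
        · exact h1deg K hK
        · exact h2deg K hK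
      · -- the edge-count bound
        rw [Finset.sum_union hF12]
        set s := gvolIn G S S with hs
        set t := gvolIn G (W \ S) (W \ S) with ht
        set cN := gcutIn G W S with hcN
        have ha : gvolIn G W S = s + cN := gvolIn_split G hSW
        have hb : gvolIn G W (W \ S) = t + cN := by
          rw [gvolIn_split G Finset.sdiff_subset, gcutIn_symm G hSW]
        have hT : gvolIn G W W = s + t + 2 * cN := by
          rw [gvolIn_top_split G hSW, ha, hb]; ring
        have hEW : edgeCountIn G W = edgeCountIn G S + edgeCountIn G (W \ S) + cN :=
          edgeCountIn_split G hSW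
        have hst : s ≤ t := by
          rw [ha, hb] at hmin; omega
        have key := keyIneq s t cN (even_gvolIn_self G S) hst
        have kk := mul_le_mul_of_nonneg_left key hφ0.le
        have hcutle : (cN : ℝ) ≤ φ * ((s : ℝ) + (cN : ℝ)) := by
          have := hcut.le
          rw [ha] at this
          push_cast at this
          linarith
        have hc3 : φ * (h : ℝ) * (W.card : ℝ)
            = φ * (h : ℝ) * (S.card : ℝ) + φ * (h : ℝ) * ((W \ S).card : ℝ) := by
          have hcc : ((W \ S).card + S.card : ℕ) = W.card :=
            Finset.card_sdiff_add_card_eq_card hSW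
          rw [← hcc]; push_cast; ring
        rw [hT, hEW]
        push_cast at kk ⊢
        nlinarith [h1sum, h2sum, hcutle, kk, hc3]

/-- There is a constant `c > 0` such that the following holds. If `H` is a finite
simple graph on `n ≥ 2` vertices with minimum degree at least `h ≥ 1`, and
`φ = c / log₂ n`, then there is a collection `F` of vertex-disjoint induced subgraphs
of `H` (cores) such that each core is a `φ`-expander whose vertices all have degree
at least `φ·h` inside the core, and the cores together contain at least `3/4` of the
edges of `H`. -/
theorem statement4 :
    ∃ c : ℝ, 0 < c ∧
      ∀ (V : Type u) [Fintype V] (H : SimpleGraph V) (h : ℕ),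
        1 ≤ h → 2 ≤ Fintype.card V →
        (∀ v : V, h ≤ gdeg H v) →
        ∃ F : Finset (Finset V),
          (∀ K ∈ F, ∀ K' ∈ F, K ≠ K' → Disjoint K K') ∧
          (∀ K ∈ F, IsInducedExpander H K (c / Real.logb 2 (Fintype.card V))) ∧
          (∀ K ∈ F, ∀ u ∈ K,
            (c / Real.logb 2 (Fintype.card V)) * (h : ℝ) ≤ (gdegIn H K u : ℝ)) ∧
          (3 / 4 : ℝ) * (edgeCount H : ℝ) ≤ ∑ K ∈ F, (edgeCountIn H K : ℝ) := by
  refine ⟨1/24, by norm_num, ?_⟩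
  intro V _ H h hh hn hdeg
  set nV := Fintype.card V with hnV
  have hn2 : (2:ℝ) ≤ (nV:ℝ) := by exact_mod_cast hn
  have hlog1 : 1 ≤ Real.logb 2 (nV:ℝ) := by
    have h2 : Real.logb 2 2 = 1 := Real.logb_self_eq_one (by norm_num)
    calc (1:ℝ) = Real.logb 2 2 := h2.symm
      _ ≤ Real.logb 2 (nV:ℝ) :=
        Real.logb_le_logb_of_le one_lt_two (by norm_num) hn2
  have hlogpos : 0 < Real.logb 2 (nV:ℝ) := lt_of_lt_of_le one_pos hlog1
  set φ := (1/24 : ℝ) / Real.logb 2 (nV:ℝ) with hφ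
  have hφ0 : 0 < φ := by positivity
  have hφc : φ ≤ 1/24 := by
    rw [hφ]; exact div_le_self (by norm_num) hlog1
  have hφ1 : φ ≤ 1 := hφc.trans (by norm_num)
  obtain ⟨F, hFsub, hFdisj, hFexp, hFdeg, hFsum⟩ :=
    core H h φ hφ0 hφ1 nV Finset.univ (by simp [hnV])
  refine ⟨F, hFdisj, hFexp, hFdeg, ?_⟩
  set m := edgeCountIn H Finset.univ with hm
  have hT2m : gvolIn H Finset.univ Finset.univ = 2 * m := by
    obtain ⟨k, hk⟩ := even_gvolIn_self H Finset.univ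
    have h2 : m = gvolIn H Finset.univ Finset.univ / 2 := edgeCountIn_eq H Finset.univ
    omega
  have hTn : gvolIn H Finset.univ Finset.univ ≤ nV * nV := by
    unfold gvolIn
    calc ∑ v ∈ Finset.univ, gdegIn H Finset.univ v
        ≤ ∑ _v ∈ (Finset.univ : Finset V), nV := by
          refine Finset.sum_le_sum fun v _ => ?_
          calc gdegIn H Finset.univ v ≤ (Finset.univ : Finset V).card :=
                Finset.card_filter_le _ _
            _ = nV := Finset.card_univ
      _ = nV * nV := by rw [Finset.sum_const, Finset.card_univ]; simp [hnV, mul_comm]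
  have hhT : h * nV ≤ gvolIn H Finset.univ Finset.univ := by
    unfold gvolIn
    calc h * nV = ∑ _v ∈ (Finset.univ : Finset V), h := by
          rw [Finset.sum_const, Finset.card_univ]; simp [hnV, mul_comm]
      _ ≤ ∑ v ∈ Finset.univ, gdegIn H Finset.univ v :=
          Finset.sum_le_sum fun v _ => hdeg v
  have hLT : Lf (2 * m) ≤ 2 * Real.logb 2 (nV:ℝ) := by
    have hmax : max 2 ((2 * m : ℕ) : ℝ) ≤ ((nV:ℝ))^2 := by
      refine max_le (by nlinarith) ?_
      have : ((2*m:ℕ):ℝ) ≤ ((nV*nV:ℕ):ℝ) := by exact_mod_cast hT2m ▸ hTn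
      push_cast at this ⊢
      nlinarith
    calc Lf (2*m) ≤ Real.logb 2 ((nV:ℝ)^2) :=
          Real.logb_le_logb_of_le one_lt_two (by positivity) hmax
      _ = 2 * Real.logb 2 (nV:ℝ) := by
          rw [Real.logb_pow]; push_cast; ring
  rw [hT2m] at hFsum
  rw [Finset.card_univ, ← hnV] at hFsum
  have hφlog : φ * Real.logb 2 (nV:ℝ) = 1/24 := by
    rw [hφ]; field_simp
  have A : φ * (h:ℝ) * (nV:ℝ) ≤ 2 * (m:ℝ) / 24 := by
    have h1 : (h:ℝ) * (nV:ℝ) ≤ 2 * (m:ℝ) := by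
      have := hT2m ▸ hhT
      exact_mod_cast this
    have h2 : φ * ((h:ℝ) * (nV:ℝ)) ≤ φ * (2 * (m:ℝ)) :=
      mul_le_mul_of_nonneg_left h1 hφ0.le
    have h3 : φ * (2 * (m:ℝ)) ≤ (1/24) * (2 * (m:ℝ)) :=
      mul_le_mul_of_nonneg_right hφc (by positivity)
    calc φ * (h:ℝ) * (nV:ℝ) = φ * ((h:ℝ) * (nV:ℝ)) := by ring
      _ ≤ φ * (2 * (m:ℝ)) := h2
      _ ≤ (1/24) * (2 * (m:ℝ)) := h3
      _ = 2 * (m:ℝ) / 24 := by ring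
  have B : φ * ((2 * m : ℕ):ℝ) * Lf (2 * m) ≤ 4 * (m:ℝ) / 24 := by
    have h1 : φ * ((2 * m : ℕ):ℝ) * Lf (2 * m)
        ≤ φ * ((2 * m : ℕ):ℝ) * (2 * Real.logb 2 (nV:ℝ)) := by
      refine mul_le_mul_of_nonneg_left hLT (by positivity)
    have h2 : φ * ((2 * m : ℕ):ℝ) * (2 * Real.logb 2 (nV:ℝ))
        = (φ * Real.logb 2 (nV:ℝ)) * (4 * (m:ℝ)) := by push_cast; ring
    rw [h2, hφlog] at h1
    calc φ * ((2 * m : ℕ):ℝ) * Lf (2 * m) ≤ (1/24) * (4 * (m:ℝ)) := h1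
      _ = 4 * (m:ℝ) / 24 := by ring
  have hEC : (edgeCount H : ℝ) = (m:ℝ) := by
    rw [edgeCount_eq_univ, hm]
  rw [hEC]
  linarith
end
end

section
/- Let D be a finite directed graph and let U ⊆ V(D) be such that every u ∈ U satisfies out-deg_D(u) ≥ 2·in-deg_D(u). For a set S ⊆ U, let S' = S ∪ {v ∈ V(D) : D has an edge from some vertex of S to v}. Then vol_D(S') ≥ (4/3)·vol_D(S). -/
open Finset
open scoped Classical

noncomputable section

variable {V : Type*} [Fintype V]

/-- The out-degree of `v` in the directed graph `D`. -/
def dOut (D : V → V → Prop) (v : V) : ℕ := {w : V | D v w}.ncard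

/-- The in-degree of `v` in the directed graph `D`. -/
def dIn (D : V → V → Prop) (v : V) : ℕ := {u : V | D u v}.ncard

/-- The volume of a vertex set `S` in the directed graph `D`:
the sum over `v ∈ S` of `in-deg(v) + out-deg(v)`. -/
def dvol (D : V → V → Prop) (S : Finset V) : ℕ := ∑ v ∈ S, (dIn D v + dOut D v)

lemma dOut_eq (D : V → V → Prop) (v : V) :
    dOut D v = (Finset.univ.filter (fun w => D v w)).card := by
  rw [dOut, Set.ncard_eq_toFinset_card']
  congr 1; ext w; simp

lemma dIn_eq (D : V → V → Prop) (v : V) :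
    dIn D v = (Finset.univ.filter (fun u => D u v)).card := by
  rw [dIn, Set.ncard_eq_toFinset_card']
  congr 1; ext w; simp

/-- If every vertex of `U` satisfies `out-deg(u) ≥ 2·in-deg(u)`, then for every
`S ⊆ U`, the out-neighborhood-closure `S' = S ∪ {v : ∃ u ∈ S, (u,v) ∈ D}`
satisfies `vol(S') ≥ (4/3)·vol(S)`. -/
theorem statement7 (D : V → V → Prop) (U : Set V)
    (hU : ∀ u ∈ U, 2 * dIn D u ≤ dOut D u)
    (S : Finset V) (hS : ∀ v ∈ S, v ∈ U) :
    (4 / 3 : ℝ) * (dvol D S : ℝ) ≤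
      (dvol D (S ∪ Finset.univ.filter fun v => ∃ u ∈ S, D u v) : ℝ) := by
  set S' := S ∪ Finset.univ.filter (fun v => ∃ u ∈ S, D u v) with hS'def
  have hsub : S ⊆ S' := Finset.subset_union_left
  -- h1 : 2 * Σ_{v∈S} dIn ≤ Σ_{v∈S} dOut
  have h1 : 2 * ∑ v ∈ S, dIn D v ≤ ∑ v ∈ S, dOut D v := by
    rw [Finset.mul_sum]
    exact Finset.sum_le_sum fun v hv => hU v (hS v hv)
  -- h3 : Σ_{u∈S} dOut ≤ Σ_{v∈S'} dIn
  have h3 : ∑ u ∈ S, dOut D u ≤ ∑ v ∈ S', dIn D v := by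
    have step1 : ∑ u ∈ S, dOut D u
        = ∑ v ∈ Finset.univ, (S.filter (fun u => D u v)).card := by
      simp_rw [dOut_eq, Finset.card_filter]
      exact Finset.sum_comm
    have step2 : ∑ v ∈ Finset.univ, (S.filter (fun u => D u v)).card
        = ∑ v ∈ S', (S.filter (fun u => D u v)).card := by
      refine (Finset.sum_subset (Finset.subset_univ S') ?_).symm
      intro v _ hv
      rw [Finset.card_eq_zero, Finset.filter_eq_empty_iff]
      intro u hu hDuv
      exact hv (Finset.mem_union.2 (Or.inr (Finset.mem_filter.2
        ⟨Finset.mem_univ v, ⟨u, hu, hDuv⟩⟩)))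
    rw [step1, step2]
    refine Finset.sum_le_sum fun v _ => ?_
    rw [dIn_eq]
    exact Finset.card_le_card (Finset.filter_subset_filter _ (Finset.subset_univ S))
  -- h4 : Σ_{u∈S} dOut ≤ Σ_{v∈S'} dOut
  have h4 : ∑ u ∈ S, dOut D u ≤ ∑ v ∈ S', dOut D v :=
    Finset.sum_le_sum_of_subset hsub
  have hvolS : dvol D S = ∑ v ∈ S, dIn D v + ∑ v ∈ S, dOut D v := by
    rw [dvol, Finset.sum_add_distrib]
  have hvolS' : dvol D S' = ∑ v ∈ S', dIn D v + ∑ v ∈ S', dOut D v := by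
    rw [dvol, Finset.sum_add_distrib]
  have key : 4 * dvol D S ≤ 3 * dvol D S' := by omega
  have keyR : (4 : ℝ) * (dvol D S : ℝ) ≤ 3 * (dvol D S' : ℝ) := by exact_mod_cast key
  linarith
end
end

section
/- There is an absolute constant C such that the following holds. Let D be a finite directed graph on n ≥ 2 vertices and let U ⊆ V(D) be such that every u ∈ U satisfies out-deg_D(u) ≥ 2·in-deg_D(u) and in-deg_D(u) + out-deg_D(u) ≥ 1. Then for every u ∈ U there is a directed path in D of length at most C·log₂ n from u to some vertex of V(D) \ U. -/
open Finset
open scoped Classical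

noncomputable section

universe u

variable {V : Type*} [Fintype V]

lemma dOut_card (D : V → V → Prop) (v : V) :
    dOut D v = (univ.filter fun w => D v w).card := by
  rw [dOut, Set.ncard_eq_toFinset_card', Set.toFinset_setOf]
lemma dIn_card (D : V → V → Prop) (v : V) :
    dIn D v = (univ.filter fun w => D w v).card := by
  rw [dIn, Set.ncard_eq_toFinset_card', Set.toFinset_setOf]

lemma edge_count (D : V → V → Prop) (S S' : Finset V)
    (hout : ∀ v ∈ S, ∀ w, D v w → w ∈ S') :
    ∑ v ∈ S, dOut D v ≤ ∑ w ∈ S', dIn D w := by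
  calc ∑ v ∈ S, dOut D v = ∑ v ∈ S, (S'.filter fun w => D v w).card := by
        apply Finset.sum_congr rfl
        intro v hv
        rw [dOut_card]
        congr 1
        ext w
        simp only [mem_filter, mem_univ, true_and]
        exact ⟨fun h => ⟨hout v hv w h, h⟩, fun h => h.2⟩
    _ = ∑ w ∈ S', (S.filter fun v => D v w).card := by
        simp only [Finset.card_filter]
        rw [Finset.sum_comm]
    _ ≤ ∑ w ∈ S', dIn D w := by
        apply Finset.sum_le_sum
        intro w _
        rw [dIn_card]
        exact Finset.card_le_card (Finset.filter_subset_filter _ (Finset.subset_univ _))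

lemma vol_double (D : V → V → Prop) (U : Set V)
    (hU : ∀ u ∈ U, 2 * dIn D u ≤ dOut D u)
    (S S' : Finset V) (hSS' : S ⊆ S') (hS'U : ∀ v ∈ S', v ∈ U)
    (hout : ∀ v ∈ S, ∀ w, D v w → w ∈ S') :
    2 * ∑ v ∈ S, (dIn D v + dOut D v) ≤ ∑ v ∈ S', (dIn D v + dOut D v) := by
  have h1 : 2 * ∑ v ∈ S, (dIn D v + dOut D v) ≤ 3 * ∑ v ∈ S, dOut D v := by
    rw [Finset.mul_sum, Finset.mul_sum]
    apply Finset.sum_le_sum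
    intro v hv
    have := hU v (hS'U v (hSS' hv))
    omega
  have h2 := edge_count D S S' hout
  have h3 : 3 * ∑ v ∈ S', dIn D v ≤ ∑ v ∈ S', (dIn D v + dOut D v) := by
    rw [Finset.mul_sum]
    apply Finset.sum_le_sum
    intro v hv
    have := hU v (hS'U v hv)
    omega
  omega

def bfs (D : V → V → Prop) (u : V) : ℕ → Finset V
  | 0 => {u}
  | k + 1 => bfs D u k ∪ univ.filter (fun w => ∃ v ∈ bfs D u k, D v w)
lemma bfs_mono (D : V → V → Prop) (u : V) : Monotone (bfs D u) :=
  monotone_nat_of_le_succ fun _ => Finset.subset_union_left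

lemma path_from_bfs (D : V → V → Prop) (u : V) :
    ∀ m, ∀ v ∈ bfs D u m, ∃ k ≤ m, ∃ f : Fin (k+1) → V,
      f 0 = u ∧ f (Fin.last k) = v ∧
      (∀ i : Fin (k+1), f i ∈ bfs D u i.val) ∧
      (∀ i : Fin (k+1), ∀ j, j < i.val → f i ∉ bfs D u j) ∧
      (∀ i : Fin k, D (f i.castSucc) (f i.succ)) := by
  intro m
  induction m with
  | zero =>
    intro v hv
    simp only [bfs, mem_singleton] at hv
    refine ⟨0, le_refl 0, fun _ => u, rfl, hv.symm ▸ rfl, ?_, ?_, ?_⟩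
    · intro i
      have : i.val = 0 := Nat.lt_one_iff.mp i.isLt
      rw [this]
      simp [bfs]
    · intro i j hj
      have : i.val = 0 := Nat.lt_one_iff.mp i.isLt
      omega
    · intro i; exact absurd i.isLt (by omega)
  | succ m ih =>
    intro v hv
    by_cases hv' : v ∈ bfs D u m
    · obtain ⟨k, hk, rest⟩ := ih v hv'
      exact ⟨k, by omega, rest⟩
    · rw [bfs, Finset.mem_union] at hv
      rcases hv with h | h
      · exact absurd h hv'
      · rw [Finset.mem_filter] at h
        obtain ⟨-, w, hw, hDwv⟩ := h
        obtain ⟨k, hk, f, hf0, hfl, hmem, hnot, hedge⟩ := ih w hw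
        refine ⟨k + 1, by omega, Fin.snoc f v, ?_, ?_, ?_, ?_, ?_⟩
        · rw [show (0 : Fin (k+2)) = Fin.castSucc 0 by rfl, Fin.snoc_castSucc]
          exact hf0
        · rw [Fin.snoc_last]
        · intro i
          refine Fin.lastCases ?_ ?_ i
          · rw [Fin.snoc_last]
            refine Finset.mem_union_right _ ?_
            rw [Finset.mem_filter]
            exact ⟨mem_univ v, f (Fin.last k), hfl ▸ hmem (Fin.last k), hfl ▸ hDwv⟩
          · intro j
            rw [Fin.snoc_castSucc]
            exact hmem j
        · intro i
          refine Fin.lastCases ?_ ?_ i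
          · intro j hj
            rw [Fin.snoc_last]
            simp only [Fin.val_last] at hj
            exact fun hc => hv' (bfs_mono D u (by omega : j ≤ m) hc)
          · intro i' j hj
            rw [Fin.snoc_castSucc]
            exact hnot i' j (by simpa using hj)
        · intro i
          refine Fin.lastCases ?_ ?_ i
          · rw [Fin.succ_last, Fin.snoc_castSucc, Fin.snoc_last, hfl]
            exact hDwv
          · intro i'
            rw [Fin.succ_castSucc, Fin.snoc_castSucc, Fin.snoc_castSucc]
            exact hedge i'

/-- There is an absolute constant `C` such that the following holds.  If `D` is a
finite directed graph on `n ≥ 2` vertices and `U` is a set of vertices in which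
every `u ∈ U` satisfies `out-deg(u) ≥ 2·in-deg(u)` and `in-deg(u) + out-deg(u) ≥ 1`,
then from every `u ∈ U` there is a directed path (a sequence of distinct vertices
following edges of `D`) of length at most `C·log₂ n` from `u` to a vertex
outside `U`. -/
theorem statement8 :
    ∃ C : ℝ, 0 < C ∧
      ∀ (V : Type u) [Fintype V] (D : V → V → Prop) (U : Set V),
        2 ≤ Fintype.card V →
        (∀ u ∈ U, 2 * dIn D u ≤ dOut D u ∧ 1 ≤ dIn D u + dOut D u) →
        ∀ u ∈ U, ∃ (k : ℕ) (f : Fin (k + 1) → V),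
          (k : ℝ) ≤ C * Real.logb 2 (Fintype.card V) ∧
          f 0 = u ∧ f (Fin.last k) ∉ U ∧ Function.Injective f ∧
          ∀ i : Fin k, D (f i.castSucc) (f i.succ) := by
  refine ⟨5, by norm_num, ?_⟩
  intro V _ D U hn hU u hu
  set n := Fintype.card V with hn_def
  have hn1 : (1:ℝ) ≤ Real.logb 2 n := by
    rw [show (1:ℝ) = Real.logb 2 2 by simp]
    gcongr
    · norm_num
    exact_mod_cast hn
  set K := Nat.floor ((5:ℝ) * Real.logb 2 n) with hK_def
  -- find an escape: ∃ m ≤ K, ∃ v ∈ bfs D u m, v ∉ U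
  have hescape : ∃ m ≤ K, ∃ v ∈ bfs D u m, v ∉ U := by
    by_contra hcon
    push_neg at hcon
    -- all bfs sets up to K inside U; volume doubles
    have hvol : ∀ k ≤ K, 2 ^ k ≤ ∑ v ∈ bfs D u k, (dIn D v + dOut D v) := by
      intro k
      induction k with
      | zero =>
        intro _
        have : ∑ v ∈ bfs D u 0, (dIn D v + dOut D v) = dIn D u + dOut D u := by
          simp [bfs]
        rw [this]
        exact (hU u hu).2
      | succ k ih =>
        intro hkK
        have h2 := vol_double D U (fun x hx => (hU x hx).1) (bfs D u k) (bfs D u (k+1))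
          (bfs_mono D u (Nat.le_succ k))
          (fun v hv => hcon (k+1) hkK v hv)
          (fun v hv w hDvw => Finset.mem_union_right _ (Finset.mem_filter.mpr
            ⟨mem_univ w, v, hv, hDvw⟩))
        have := ih (by omega)
        calc 2 ^ (k+1) = 2 * 2 ^ k := by ring
          _ ≤ 2 * ∑ v ∈ bfs D u k, (dIn D v + dOut D v) := by omega
          _ ≤ _ := h2
    have hbound : ∑ v ∈ bfs D u K, (dIn D v + dOut D v) ≤ 2 * n ^ 2 := by
      calc ∑ v ∈ bfs D u K, (dIn D v + dOut D v)
          ≤ ∑ v ∈ (univ : Finset V), (dIn D v + dOut D v) :=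
            Finset.sum_le_sum_of_subset (Finset.subset_univ _)
        _ ≤ ∑ _v ∈ (univ : Finset V), (n + n) := by
            apply Finset.sum_le_sum
            intro v _
            have h1 : dIn D v ≤ n := by
              rw [dIn_card, hn_def, ← Finset.card_univ]
              exact Finset.card_le_card (Finset.filter_subset _ _)
            have h2 : dOut D v ≤ n := by
              rw [dOut_card, hn_def, ← Finset.card_univ]
              exact Finset.card_le_card (Finset.filter_subset _ _)
            omega
        _ = 2 * n ^ 2 := by
            rw [Finset.sum_const, Finset.card_univ, ← hn_def]; ring
    have hK2 : (2:ℕ) ^ K ≤ 2 * n ^ 2 := le_trans (hvol K le_rfl) hbound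
    -- but 2^K ≥ n^4 > 2n^2
    have hKlarge : ((n:ℝ)) ^ (4:ℕ) ≤ (2:ℝ) ^ K := by
      have hnpos : (0:ℝ) < n := by positivity
      have h4L : (4:ℝ) * Real.logb 2 n ≤ K := by
        have := Nat.lt_floor_add_one ((5:ℝ) * Real.logb 2 n)
        rw [← hK_def] at this
        nlinarith
      calc ((n:ℝ)) ^ (4:ℕ) = ((2:ℝ) ^ (Real.logb 2 n)) ^ (4:ℕ) := by
            rw [Real.rpow_logb (by norm_num) (by norm_num) hnpos]
        _ = (2:ℝ) ^ ((4:ℝ) * Real.logb 2 n) := by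
            rw [mul_comm, Real.rpow_mul (by norm_num : (0:ℝ) ≤ 2),
              show ((4:ℝ)) = ((4:ℕ):ℝ) by norm_num, Real.rpow_natCast]
        _ ≤ (2:ℝ) ^ ((K:ℝ)) := by
            apply Real.rpow_le_rpow_left_iff (by norm_num : (1:ℝ) < 2) |>.mpr h4L
        _ = (2:ℝ) ^ K := by rw [Real.rpow_natCast]
    have hK2' : ((2:ℝ)) ^ K ≤ 2 * (n:ℝ) ^ 2 := by exact_mod_cast hK2
    have hn2 : (2:ℝ) ≤ (n:ℝ) := by exact_mod_cast hn
    have hsq : (4:ℝ) ≤ (n:ℝ)^2 := by nlinarith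
    have h4 : 4*(n:ℝ)^2 ≤ (n:ℝ)^4 := by nlinarith [sq_nonneg ((n:ℝ)^2 - 4)]
    linarith
  obtain ⟨m, hmK, v, hvm, hvU⟩ := hescape
  obtain ⟨k, hkm, f, hf0, hfl, hmem, hnot, hedge⟩ := path_from_bfs D u m v hvm
  refine ⟨k, f, ?_, hf0, hfl ▸ hvU, ?_, hedge⟩
  · have : (k:ℝ) ≤ (K:ℝ) := by exact_mod_cast le_trans hkm hmK
    calc (k:ℝ) ≤ (K:ℝ) := this
      _ ≤ 5 * Real.logb 2 n := Nat.floor_le (by linarith)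
  · intro a b hab
    by_contra hne
    rcases Nat.lt_or_ge a.val b.val with h | h
    · exact hnot b a.val h (hab ▸ hmem a)
    · have h' : b.val < a.val := by
        rcases Nat.lt_or_ge b.val a.val with h2 | h2
        · exact h2
        · exact absurd (Fin.ext (le_antisymm h2 h)) hne
      exact hnot a b.val h' (hab ▸ hmem b)
end
end

section
/- There is an absolute constant C such that the following holds. Let D be a finite directed acyclic graph on n ≥ 2 vertices and let t be a vertex of D such that every vertex v ≠ t satisfies out-deg_D(v) ≥ 2·in-deg_D(v). Then for every vertex u ≠ t there exists a family of out-deg_D(u) pairwise edge-disjoint directed paths in D, each starting at u, ending at t, and having length at most C·log₂ n. -/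
open Finset
open scoped Classical

noncomputable section

universe u

variable {V : Type*} [Fintype V]

/-!
The degree condition lets every vertex `v ≠ t` send each pair (edge entering `v`, bit) to its
own edge leaving `v`. Following these choices, an edge `e` and a bit string determine a walk
starting with `e`, and strings of equal length give distinct final edges as long as none of the
walks has reached `t`. Hence for some string the walk reaches `t` after `m` steps with
`2 ^ m ≤ #edges ≤ n ^ 2`, so it has at most `2 log₂ n + 1` edges. Two such walks starting with
different edges out of `u` share no edge: cancelling the common tail of the bit strings would
exhibit one starting edge as an edge of the other walk, hence a closed walk through `u`.
Acyclicity also makes every walk a path.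
-/

section BranchingProcess

variable {E : Type*}

def branchIter (next : E → Bool → E) (e : E) (σ : ℕ → Bool) : ℕ → E
  | 0 => e
  | j + 1 => next (branchIter next e σ j) (σ j)

variable {next : E → Bool → E} {halt : E → Prop}

theorem eq_branchIter_of_branchIter_eq_add
    (hnext : ∀ x y b c, ¬ halt x → ¬ halt y → next x b = next y c → x = y ∧ b = c)
    {e e' : E} {σ σ' : ℕ → Bool} {i : ℕ} :
    ∀ {j : ℕ}, (∀ l < j, ¬ halt (branchIter next e σ l)) →
      (∀ l < i + j, ¬ halt (branchIter next e' σ' l)) →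
      branchIter next e σ j = branchIter next e' σ' (i + j) → e = branchIter next e' σ' i
  | 0, _, _, h => h
  | j + 1, hns, hns', h =>
    eq_branchIter_of_branchIter_eq_add hnext (fun l hl => hns l (by omega))
      (fun l hl => hns' l (by omega))
      (hnext _ _ _ _ (hns j (by omega)) (hns' (i + j) (by omega)) h).1

theorem prefix_eq_of_branchIter_eq
    (hnext : ∀ x y b c, ¬ halt x → ¬ halt y → next x b = next y c → x = y ∧ b = c)
    {e : E} {σ σ' : ℕ → Bool} :
    ∀ {L : ℕ}, (∀ l < L, ¬ halt (branchIter next e σ l)) →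
      (∀ l < L, ¬ halt (branchIter next e σ' l)) →
      branchIter next e σ L = branchIter next e σ' L → ∀ l < L, σ l = σ' l
  | 0, _, _, _, _, hl => absurd hl (Nat.not_lt_zero _)
  | L + 1, hns, hns', h, l, hl => by
    obtain ⟨hiter, hbit⟩ := hnext _ _ _ _ (hns L (by omega)) (hns' L (by omega)) h
    rcases Nat.lt_succ_iff_lt_or_eq.mp hl with hl | rfl
    · exact prefix_eq_of_branchIter_eq hnext (fun l hl => hns l (by omega))
        (fun l hl => hns' l (by omega)) hiter l hl
    · exact hbit

theorem two_pow_le_card_of_forall_not_halt [Fintype E]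
    (hnext : ∀ x y b c, ¬ halt x → ¬ halt y → next x b = next y c → x = y ∧ b = c)
    {e : E} {L : ℕ} (hns : ∀ σ, ∀ l < L, ¬ halt (branchIter next e σ l)) :
    2 ^ L ≤ Fintype.card E := by
  let extend (τ : Fin L → Bool) (l : ℕ) : Bool := if h : l < L then τ ⟨l, h⟩ else false
  have hinj : Function.Injective fun τ => branchIter next e (extend τ) L := by
    intro τ τ' h
    funext l
    simpa [extend] using prefix_eq_of_branchIter_eq hnext (hns _) (hns _) h l l.2
  simpa using Fintype.card_le_of_injective _ hinj

theorem exists_branchIter_halt [Fintype E]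
    (hnext : ∀ x y b c, ¬ halt x → ¬ halt y → next x b = next y c → x = y ∧ b = c) (e : E) :
    ∃ (σ : ℕ → Bool) (m : ℕ), halt (branchIter next e σ m) ∧
      (∀ l < m, ¬ halt (branchIter next e σ l)) ∧ 2 ^ m ≤ Fintype.card E := by
  have hex : ∃ m σ, halt (branchIter next e σ m) := by
    by_contra! h
    exact (Fintype.card E).lt_two_pow_self.not_ge
      (two_pow_le_card_of_forall_not_halt hnext fun σ l _ => h l σ)
  obtain ⟨σ, hσ⟩ := Nat.find_spec hex
  exact ⟨σ, Nat.find hex, hσ, fun l hl h => Nat.find_min hex hl ⟨σ, h⟩,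
    two_pow_le_card_of_forall_not_halt hnext fun σ' l hl h => Nat.find_min hex hl ⟨σ', h⟩⟩

end BranchingProcess

section Walks

variable {W : Type*} {r : W → W → Prop} {p : ℕ → W} {n : ℕ}

theorem transGen_of_rel_succ (h : ∀ j < n, r (p j) (p (j + 1))) {i : ℕ} :
    ∀ {j : ℕ}, i < j → j ≤ n → Relation.TransGen r (p i) (p j)
  | 0, hij, _ => absurd hij (Nat.not_lt_zero _)
  | j + 1, hij, hjn => by
    rcases Nat.lt_succ_iff_lt_or_eq.mp hij with hij | rfl
    · exact (transGen_of_rel_succ h hij (by omega)).tail (h j (by omega))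
    · exact .single (h i (by omega))

theorem eq_of_rel_succ_of_acyclic (hacyc : ∀ v, ¬ Relation.TransGen r v v)
    (h : ∀ j < n, r (p j) (p (j + 1))) {i j : ℕ} (hi : i ≤ n) (hj : j ≤ n) (hp : p i = p j) :
    i = j := by
  rcases lt_trichotomy i j with hij | hij | hij
  · exact absurd (hp ▸ transGen_of_rel_succ h hij hj) (hacyc _)
  · exact hij
  · exact absurd (hp ▸ transGen_of_rel_succ h hij hi) (hacyc _)

end Walks

section Graph

variable {W : Type*} [Fintype W]

abbrev Edge (D : W → W → Prop) := {p : W × W // D p.1 p.2}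

theorem card_edge_le (D : W → W → Prop) : Fintype.card (Edge D) ≤ Fintype.card W ^ 2 :=
  (Fintype.card_subtype_le _).trans (by rw [Fintype.card_prod, sq])

theorem dIn_eq_card (D : W → W → Prop) (v : W) : dIn D v = Fintype.card {x // D x v} :=
  (Nat.card_coe_set_eq _).symm.trans Nat.card_eq_fintype_card

theorem dOut_eq_card (D : W → W → Prop) (v : W) : dOut D v = Fintype.card {w // D v w} :=
  (Nat.card_coe_set_eq _).symm.trans Nat.card_eq_fintype_card

structure Branching (D : W → W → Prop) (t : W) where
  next : Edge D → Bool → Edge D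
  fst_next : ∀ e b, e.1.2 ≠ t → (next e b).1.1 = e.1.2
  next_inj : ∀ e e' b b', e.1.2 ≠ t → e'.1.2 ≠ t → next e b = next e' b' → e = e' ∧ b = b'

theorem nonempty_branching {D : W → W → Prop} {t : W}
    (hdeg : ∀ v, v ≠ t → 2 * dIn D v ≤ dOut D v) : Nonempty (Branching D t) := by
  have hemb : ∀ v, v ≠ t → Nonempty ({x // D x v} × Bool ↪ {w // D v w}) := fun v hv =>
    Function.Embedding.nonempty_of_card_le <| by
      rw [Fintype.card_prod, Fintype.card_bool, ← dIn_eq_card, ← dOut_eq_card, mul_comm]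
      exact hdeg v hv
  let Φ v (hv : v ≠ t) := Classical.choice (hemb v hv)
  refine ⟨⟨fun e b => if h : e.1.2 = t then e else
      ⟨(e.1.2, Φ e.1.2 h (⟨e.1.1, e.2⟩, b)), (Φ e.1.2 h (⟨e.1.1, e.2⟩, b)).2⟩, ?_, ?_⟩⟩
  · intro e b he
    simp [he]
  · rintro ⟨⟨x, v⟩, hxv⟩ ⟨⟨y, w⟩, hyw⟩ b b' hv hw h
    simp only [dif_neg hv, dif_neg hw, Subtype.mk.injEq, Prod.mk.injEq] at h
    obtain ⟨rfl, h⟩ := h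
    have := (Φ v hv).injective (Subtype.ext h)
    simp only [Prod.mk.injEq, Subtype.mk.injEq] at this
    obtain ⟨rfl, rfl⟩ := this
    exact ⟨rfl, rfl⟩

end Graph

namespace Branching

variable {W : Type*} {D : W → W → Prop} {t : W} (B : Branching D t)

/-- Vertex `j` of the walk is the tail of its `j`-th edge `branchIter B.next e σ j`. -/
def walkVertex (e : Edge D) (σ : ℕ → Bool) : ℕ → W
  | 0 => e.1.1
  | j + 1 => (branchIter B.next e σ j).1.2

variable {B} {e : Edge D} {σ : ℕ → Bool} {j : ℕ}

theorem val_branchIter (hns : ∀ l < j, (branchIter B.next e σ l).1.2 ≠ t) :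
    (branchIter B.next e σ j).1 = (B.walkVertex e σ j, B.walkVertex e σ (j + 1)) := by
  cases j with
  | zero => rfl
  | succ j => exact Prod.ext (B.fst_next _ _ (hns j j.lt_succ_self)) rfl

theorem rel_walkVertex (hns : ∀ l < j, (branchIter B.next e σ l).1.2 ≠ t) :
    D (B.walkVertex e σ j) (B.walkVertex e σ (j + 1)) := by
  simpa [val_branchIter hns] using (branchIter B.next e σ j).2

theorem eq_of_branchIter_eq (hacyc : ∀ v, ¬ Relation.TransGen D v v) {e' : Edge D}
    {σ' : ℕ → Bool} {j' : ℕ} (hns : ∀ l < j, (branchIter B.next e σ l).1.2 ≠ t)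
    (hns' : ∀ l < j', (branchIter B.next e' σ' l).1.2 ≠ t)
    (h : branchIter B.next e σ j = branchIter B.next e' σ' j') (he : e.1.1 = e'.1.1) : e = e' := by
  wlog hjj : j ≤ j' generalizing e e' σ σ' j j'
  · exact (this hns' hns h.symm he.symm (by omega)).symm
  obtain ⟨i, rfl⟩ := Nat.exists_eq_add_of_le' hjj
  have hei := eq_branchIter_of_branchIter_eq_add (halt := fun x => x.1.2 = t) B.next_inj
    hns hns' h
  rcases Nat.eq_zero_or_pos i with rfl | hi
  · exact hei
  · have hcycle := transGen_of_rel_succ (p := B.walkVertex e' σ')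
      (fun l hl => rel_walkVertex fun l' hl' => hns' l' (by omega)) hi le_rfl
    have hfst : (branchIter B.next e' σ' i).1.1 = B.walkVertex e' σ' i := by
      rw [val_branchIter fun l hl => hns' l (by omega)]
    rw [← hfst, ← hei, he] at hcycle
    exact absurd hcycle (hacyc _)

end Branching

theorem natCast_succ_le_three_mul_logb {m n : ℕ} (hm : 2 ^ m ≤ n ^ 2) (hn : 2 ≤ n) :
    ((m + 1 : ℕ) : ℝ) ≤ 3 * Real.logb 2 n := by
  have hn' : (2 : ℝ) ≤ n := by exact_mod_cast hn
  have hlog : 1 ≤ Real.logb 2 n :=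
    (Real.le_logb_iff_rpow_le one_lt_two (by linarith)).mpr (by simpa using hn')
  have hm' : (m : ℝ) ≤ 2 * Real.logb 2 n := by
    have hsq : Real.logb 2 ((n : ℝ) ^ 2) = 2 * Real.logb 2 n := by simp [Real.logb_pow]
    rw [← hsq, Real.le_logb_iff_rpow_le one_lt_two (by positivity), Real.rpow_natCast]
    exact_mod_cast hm
  push_cast
  linarith

/-- There is an absolute constant `C` such that the following holds.  Let `D` be a
finite directed acyclic graph on `n ≥ 2` vertices and let `t` be a vertex such that
every vertex `v ≠ t` satisfies `out-deg(v) ≥ 2·in-deg(v)`.  Then for every vertex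
`u ≠ t` there are `out-deg(u)` pairwise edge-disjoint directed paths from `u` to
`t`, each of length at most `C·log₂ n`. -/
theorem statement9 :
    ∃ C : ℝ, 0 < C ∧
      ∀ (V : Type u) [Fintype V] (D : V → V → Prop) (t : V),
        2 ≤ Fintype.card V →
        (∀ v : V, ¬ Relation.TransGen D v v) →
        (∀ v : V, v ≠ t → 2 * dIn D v ≤ dOut D v) →
        ∀ u : V, u ≠ t →
          ∃ (k : Fin (dOut D u) → ℕ) (f : ∀ i, Fin (k i + 1) → V),
            (∀ i, f i 0 = u ∧ f i (Fin.last (k i)) = t ∧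
              ((k i : ℝ) ≤ C * Real.logb 2 (Fintype.card V)) ∧
              Function.Injective (f i) ∧
              ∀ j : Fin (k i), D (f i j.castSucc) (f i j.succ)) ∧
            (∀ i₁ i₂, i₁ ≠ i₂ → ∀ (j₁ : Fin (k i₁)) (j₂ : Fin (k i₂)),
              (f i₁ j₁.castSucc, f i₁ j₁.succ) ≠ (f i₂ j₂.castSucc, f i₂ j₂.succ)) := by
  refine ⟨3, by norm_num, fun V _ D t hn hacyc hdeg u _ => ?_⟩
  obtain ⟨B⟩ := nonempty_branching hdeg
  let out : Fin (dOut D u) ≃ {w // D u w} :=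
    (Fintype.equivFinOfCardEq (dOut_eq_card D u).symm).symm
  let root (i : Fin (dOut D u)) : Edge D := ⟨(u, out i), (out i).2⟩
  choose σ m hhalt hns hcard using fun i =>
    exists_branchIter_halt (halt := fun x => x.1.2 = t) B.next_inj (root i)
  have hns_le : ∀ i, ∀ j ≤ m i, ∀ l < j, (branchIter B.next (root i) (σ i) l).1.2 ≠ t :=
    fun i j hj l hl => hns i l (by omega)
  refine ⟨fun i => m i + 1, fun i x => B.walkVertex (root i) (σ i) x, fun i => ⟨rfl, hhalt i,
    natCast_succ_le_three_mul_logb ((hcard i).trans (card_edge_le D)) hn, ?_, ?_⟩, ?_⟩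
  · intro a b hab
    exact Fin.ext <| eq_of_rel_succ_of_acyclic (n := m i + 1) hacyc
      (fun j hj => Branching.rel_walkVertex (hns_le i j (Nat.lt_succ_iff.mp hj)))
      (Nat.lt_succ_iff.mp a.2) (Nat.lt_succ_iff.mp b.2) hab
  · exact fun j => Branching.rel_walkVertex (hns_le i j (Nat.lt_succ_iff.mp j.2))
  · intro i₁ i₂ hne j₁ j₂ h
    have hns₁ := hns_le i₁ j₁ (Nat.lt_succ_iff.mp j₁.2)
    have hns₂ := hns_le i₂ j₂ (Nat.lt_succ_iff.mp j₂.2)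
    have hiter : branchIter B.next (root i₁) (σ i₁) j₁ = branchIter B.next (root i₂) (σ i₂) j₂ :=
      Subtype.ext <| by rw [Branching.val_branchIter hns₁, Branching.val_branchIter hns₂]; exact h
    have hroot := Branching.eq_of_branchIter_eq hacyc hns₁ hns₂ hiter rfl
    exact hne (out.injective (Subtype.ext (congrArg (fun e : Edge D => e.1.2) hroot)))
end
end

section
/- Let G be a finite simple graph with m ≥ 2 edges and minimum degree at least 1, let A and B be disjoint sets of vertices of G with |A| ≤ |B|, and let ℓ ≥ 32·log₂ m be an integer. Then at least one of the following holds: (i) there exist a matching M between A and B (a set of pairs (a, b) with a ∈ A and b ∈ B, in which all first coordinates are distinct and all second coordinates are distinct) with |M| ≥ (8·log₂ m/ℓ²)·|A|, together with a family (P_{ab})_{(a,b)∈M} of pairwise edge-disjoint paths in G, where each P_{ab} joins a to b and has length at most ℓ; or (ii) there is a partition of V(G) into nonempty sets X and Y with δ_G(X) ≤ (24·log₂ m/ℓ)·min(vol_G(X), vol_G(Y)). -/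
/-!
Take a maximum family `M` of pairs in `A × B` with distinct ends, joined by pairwise
edge-disjoint paths of length at most `ℓ`, and suppose `|M| < 8 log₂ m · |A| / ℓ²`. Delete the
fewer than `8 log₂ m · |A| / ℓ` edges `F` used by the paths. In `G - F`, the balls of radius `ℓ/2`
around the unmatched vertices of `A` and of `B` are disjoint, since a common vertex would yield one
more path; so one of them, around a set `S` with `|S| ≥ |A|/2`, has at most half the volume.
Grow this ball one layer at a time: if no layer is a cut of sparsity `φ = 24 log₂ m / ℓ`, then each
layer has at least `φ · vol` boundary edges in `G`, of which at most `|F| ≤ 16 log₂ m / ℓ · vol`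
are deleted, so the volume grows by the factor `1 + 8 log₂ m / ℓ` at each of the `ℓ/2` steps and
exceeds `m`.
-/

open Finset
open scoped Classical

noncomputable section

variable {V : Type*} [Fintype V]

open SimpleGraph

lemma gvol_eq_card_filter (G : SimpleGraph V) (S : Finset V) :
    gvol G S = #(univ.filter fun p : V × V => p.1 ∈ S ∧ G.Adj p.1 p.2) := by
  rw [gvol, card_eq_sum_card_fiberwise (f := Prod.fst) (t := S) fun p hp => (mem_filter.1 hp).2.1]
  refine sum_congr rfl fun v hv => ?_
  refine (card_bij (fun p _ => p.2) ?_ ?_ ?_).symm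
  · intro p hp
    simp only [mem_filter, mem_univ, true_and] at hp ⊢
    exact hp.2 ▸ hp.1.2
  · intro p hp q hq h
    exact Prod.ext ((mem_filter.1 hp).2.trans (mem_filter.1 hq).2.symm) h
  · intro u hu
    exact ⟨(v, u), by simpa [hv] using hu, rfl⟩

lemma gvol_univ (G : SimpleGraph V) : gvol G univ = 2 * edgeCount G := by
  have hdeg : gvol G univ = ∑ v, G.degree v := by
    simp only [gvol, gdeg, degree, neighborFinset_eq_filter]
  have hpairs : #(univ.filter fun p : V × V => G.Adj p.1 p.2) = 2 * #G.edgeFinset := by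
    rw [← sum_degrees_eq_twice_card_edges, ← hdeg, gvol_eq_card_filter]
    simp only [mem_univ, true_and]
  rw [edgeCount, hpairs, hdeg, sum_degrees_eq_twice_card_edges]
  omega

lemma card_le_gvol {G : SimpleGraph V} (hmin : ∀ v, 1 ≤ gdeg G v) (S : Finset V) :
    #S ≤ gvol G S :=
  card_eq_sum_ones S ▸ sum_le_sum fun v _ => hmin v

lemma gvol_mono (G : SimpleGraph V) {S T : Finset V} (h : S ⊆ T) : gvol G S ≤ gvol G T :=
  sum_le_sum_of_subset h

lemma gvol_union (G : SimpleGraph V) {S T : Finset V} (h : Disjoint S T) :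
    gvol G (S ∪ T) = gvol G S + gvol G T :=
  sum_union h

lemma gvol_add_gvol_sdiff (G : SimpleGraph V) {S T : Finset V} (h : S ⊆ T) :
    gvol G S + gvol G (T \ S) = gvol G T := by
  rw [gvol, gvol, gvol, add_comm, sum_sdiff h]

lemma gvol_le_gvol_compl {G : SimpleGraph V} {X : Finset V} (h : 2 * gvol G X ≤ gvol G univ) :
    gvol G X ≤ gvol G (univ \ X) := by
  have := gvol_add_gvol_sdiff G (subset_univ X)
  omega

lemma gcut_le_gcut_deleteEdges_add (G : SimpleGraph V) (F : Finset (Sym2 V)) (S : Finset V) :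
    gcut G S ≤ gcut (G.deleteEdges F) S + #F := by
  set C := univ.filter fun p : V × V => p.1 ∈ S ∧ p.2 ∉ S ∧ G.Adj p.1 p.2
  have hkept : #(C.filter fun p => s(p.1, p.2) ∉ F) ≤ gcut (G.deleteEdges F) S := by
    refine card_le_card fun p hp => ?_
    simp only [C, mem_filter, mem_univ, true_and] at hp ⊢
    exact ⟨hp.1.1, hp.1.2.1, (deleteEdges_adj ..).2 ⟨hp.1.2.2, hp.2⟩⟩
  have hdeleted : #(C.filter fun p => s(p.1, p.2) ∈ F) ≤ #F := by
    refine card_le_card_of_injOn (fun p => s(p.1, p.2)) (fun p hp => (mem_filter.1 hp).2) ?_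
    intro p hp q hq h
    have hp' := (mem_filter.1 (mem_filter.1 hp).1).2
    have hq' := (mem_filter.1 (mem_filter.1 hq).1).2
    rcases Sym2.eq_iff.1 h with ⟨h₁, h₂⟩ | ⟨h₁, -⟩
    · exact Prod.ext h₁ h₂
    · exact absurd (h₁ ▸ hp'.1) hq'.2.1
  have hsplit := card_filter_add_card_filter_not (s := C) (fun p => s(p.1, p.2) ∈ F)
  change #C ≤ _
  omega

lemma gcut_le_gvol_sdiff {G H : SimpleGraph V} (hHG : H ≤ G) {S T : Finset V}
    (hT : ∀ u ∈ S, ∀ v, H.Adj u v → v ∈ T) : gcut H S ≤ gvol G (T \ S) := by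
  rw [gvol_eq_card_filter]
  refine card_le_card_of_injOn Prod.swap (fun p hp => ?_) (Prod.swap_injective.injOn)
  simp only [mem_univ, true_and, coe_filter, Set.mem_ofPred_eq, mem_sdiff,
    Prod.fst_swap, Prod.snd_swap] at hp ⊢
  exact ⟨⟨hT _ hp.1 _ hp.2.2, hp.2.1⟩, hHG hp.2.2.symm⟩

def setBall (H : SimpleGraph V) (S : Finset V) (r : ℕ) : Finset V :=
  univ.filter fun v => ∃ a ∈ S, ∃ w : H.Walk a v, w.length ≤ r

section setBall

variable {H : SimpleGraph V} {S : Finset V} {r : ℕ}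

lemma mem_setBall {v : V} :
    v ∈ setBall H S r ↔ ∃ a ∈ S, ∃ w : H.Walk a v, w.length ≤ r := by
  simp [setBall]

lemma subset_setBall : S ⊆ setBall H S r :=
  fun a ha => mem_setBall.2 ⟨a, ha, .nil, Nat.zero_le r⟩

lemma setBall_mono {s : ℕ} (h : r ≤ s) : setBall H S r ⊆ setBall H S s := fun v hv => by
  obtain ⟨a, ha, w, hw⟩ := mem_setBall.1 hv
  exact mem_setBall.2 ⟨a, ha, w, hw.trans h⟩

lemma mem_setBall_succ_of_adj {u v : V} (hu : u ∈ setBall H S r) (huv : H.Adj u v) :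
    v ∈ setBall H S (r + 1) := by
  obtain ⟨a, ha, w, hw⟩ := mem_setBall.1 hu
  exact mem_setBall.2 ⟨a, ha, w.concat huv, by rw [Walk.length_concat]; omega⟩

lemma exists_walk_of_mem_setBall_of_mem_setBall {T : Finset V} {z : V}
    (hS : z ∈ setBall H S r) (hT : z ∈ setBall H T r) :
    ∃ a ∈ S, ∃ b ∈ T, ∃ w : H.Walk a b, w.length ≤ 2 * r := by
  obtain ⟨a, ha, w₁, hw₁⟩ := mem_setBall.1 hS
  obtain ⟨b, hb, w₂, hw₂⟩ := mem_setBall.1 hT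
  refine ⟨a, ha, b, hb, w₁.append w₂.reverse, ?_⟩
  rw [Walk.length_append, Walk.length_reverse]
  omega

end setBall

section growth

variable {G : SimpleGraph V} (F : Finset (Sym2 V)) {S : Finset V}

lemma gvol_add_gcut_le_gvol_setBall_succ (i : ℕ) :
    gvol G (setBall (G.deleteEdges F) S i) + gcut G (setBall (G.deleteEdges F) S i) ≤
      gvol G (setBall (G.deleteEdges F) S (i + 1)) + #F := by
  have hcut := gcut_le_gcut_deleteEdges_add G F (setBall (G.deleteEdges F) S i)
  have hlayer := gcut_le_gvol_sdiff (deleteEdges_le (G := G) F)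
    (T := setBall (G.deleteEdges F) S (i + 1)) fun _ hu _ huv => mem_setBall_succ_of_adj hu huv
  have hsplit := gvol_add_gvol_sdiff G
    (setBall_mono (H := G.deleteEdges F) (S := S) (Nat.le_add_right i 1))
  omega

lemma pow_mul_gvol_le_gvol_setBall {x : ℝ} (hx : 0 ≤ 1 + x) {r : ℕ}
    (hcut : ∀ i < r, (#F : ℝ) + x * gvol G (setBall (G.deleteEdges F) S i) ≤
      gcut G (setBall (G.deleteEdges F) S i)) :
    (1 + x) ^ r * gvol G S ≤ gvol G (setBall (G.deleteEdges F) S r) := by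
  induction r with
  | zero => simpa using gvol_mono G (subset_setBall (H := G.deleteEdges F) (r := 0))
  | succ i ih =>
    have hstep : (gvol G (setBall (G.deleteEdges F) S i) : ℝ) +
        gcut G (setBall (G.deleteEdges F) S i) ≤
          gvol G (setBall (G.deleteEdges F) S (i + 1)) + #F := by
      exact_mod_cast gvol_add_gcut_le_gvol_setBall_succ F i
    have hi := hcut i (Nat.lt_succ_self i)
    calc (1 + x) ^ (i + 1) * gvol G S = (1 + x) * ((1 + x) ^ i * gvol G S) := by ring
      _ ≤ (1 + x) * gvol G (setBall (G.deleteEdges F) S i) :=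
        mul_le_mul_of_nonneg_left (ih fun j hj => hcut j (hj.trans (Nat.lt_succ_self i))) hx
      _ ≤ gvol G (setBall (G.deleteEdges F) S (i + 1)) := by linarith

end growth

lemma exists_sparse_cut_of_gcut_le {G : SimpleGraph V} {X : Finset V} {φ : ℝ}
    (hX : 0 < gvol G X) (hhalf : 2 * gvol G X ≤ gvol G univ)
    (hcut : (gcut G X : ℝ) ≤ φ * gvol G X) :
    ∃ X : Finset V, X.Nonempty ∧ (univ \ X).Nonempty ∧
      (gcut G X : ℝ) ≤ φ * min (gvol G X : ℝ) (gvol G (univ \ X) : ℝ) := by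
  have hcompl := gvol_le_gvol_compl hhalf
  refine ⟨X, nonempty_of_sum_ne_zero hX.ne',
    nonempty_of_sum_ne_zero (show gvol G (univ \ X) ≠ 0 by omega), ?_⟩
  rwa [min_eq_left (by exact_mod_cast hcompl)]

lemma exists_sparse_cut_of_two_mul_gvol_setBall_le {G : SimpleGraph V}
    (hmin : ∀ v, 1 ≤ gdeg G v) (F : Finset (Sym2 V)) {S : Finset V} (hS : S.Nonempty)
    {φ β : ℝ} (hβφ : β ≤ 1 + φ) (hF : (#F : ℝ) ≤ β * #S) {r : ℕ}
    (hsmall : 2 * gvol G (setBall (G.deleteEdges F) S r) ≤ gvol G univ)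
    (hr : (gvol G univ : ℝ) < 2 * (1 + (φ - β)) ^ r) :
    ∃ X : Finset V, X.Nonempty ∧ (univ \ X).Nonempty ∧
      (gcut G X : ℝ) ≤ φ * min (gvol G X : ℝ) (gvol G (univ \ X) : ℝ) := by
  have hS₀ : (0 : ℝ) < #S := by exact_mod_cast hS.card_pos
  have hβ : 0 ≤ β := nonneg_of_mul_nonneg_left ((#F).cast_nonneg.trans hF) hS₀
  have hSball : ∀ i, (#S : ℝ) ≤ gvol G (setBall (G.deleteEdges F) S i) := fun i => by
    exact_mod_cast (card_le_card subset_setBall).trans (card_le_gvol hmin _)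
  have hhalf : ∀ i ≤ r, 2 * gvol G (setBall (G.deleteEdges F) S i) ≤ gvol G univ :=
    fun i hi => (Nat.mul_le_mul_left 2 (gvol_mono G (setBall_mono hi))).trans hsmall
  by_cases hsparse : ∃ i < r,
      (gcut G (setBall (G.deleteEdges F) S i) : ℝ) ≤ φ * gvol G (setBall (G.deleteEdges F) S i)
  · obtain ⟨i, hi, hcut⟩ := hsparse
    exact exists_sparse_cut_of_gcut_le (by exact_mod_cast hS₀.trans_le (hSball i))
      (hhalf i hi.le) hcut
  push Not at hsparse
  have hgrowth := pow_mul_gvol_le_gvol_setBall F (x := φ - β) (by linarith) fun i hi => by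
    nlinarith [hsparse i hi, hSball i]
  have hSvol : (1 : ℝ) ≤ gvol G S := by
    exact_mod_cast hS.card_pos.trans_le (card_le_gvol hmin S)
  have hball : (2 * gvol G (setBall (G.deleteEdges F) S r) : ℝ) ≤ gvol G univ := by
    exact_mod_cast hsmall
  nlinarith [pow_nonneg (by linarith : (0 : ℝ) ≤ 1 + (φ - β)) r]

lemma lt_one_add_div_pow_half {m : ℝ} (hm : 2 ≤ m) {ℓ : ℕ}
    (hℓ : 32 * Real.logb 2 m ≤ ℓ) :
    m < (1 + 8 * Real.logb 2 m / ℓ) ^ (ℓ / 2) := by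
  set L := Real.logb 2 m
  have hlog2 := Real.log_two_lt_d9
  have hlog2pos := Real.log_pos one_lt_two
  have hL : 1 ≤ L := by
    rw [Real.le_logb_iff_rpow_le one_lt_two (by linarith), Real.rpow_one]; exact hm
  have hℓpos : (0 : ℝ) < ℓ := by linarith
  set x := 8 * L / ℓ
  have hx0 : 0 ≤ x := by positivity
  have hx : x ≤ 1 / 4 := by rw [div_le_iff₀ hℓpos]; linarith
  have hr : ((ℓ : ℝ) - 1) / 2 ≤ (ℓ / 2 : ℕ) := by
    have : ℓ ≤ 2 * (ℓ / 2) + 1 := by omega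
    have : (ℓ : ℝ) ≤ 2 * (ℓ / 2 : ℕ) + 1 := by exact_mod_cast this
    linarith
  have hlogx : 8 / 9 * x ≤ Real.log (1 + x) := by
    refine le_trans ?_ (Real.le_log_one_add_of_nonneg hx0)
    rw [le_div_iff₀ (by linarith)]; nlinarith
  have hrx : 31 / 8 * L ≤ (ℓ / 2 : ℕ) * x := by
    have : ((ℓ : ℝ) - 1) / 2 * x = 4 * L - 4 * L / ℓ := by simp only [x]; field_simp; ring
    have : 4 * L / ℓ ≤ 1 / 8 * L := by rw [div_le_iff₀ hℓpos]; nlinarith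
    nlinarith
  have hm_log : Real.log m = L * Real.log 2 := by
    simp only [L, Real.logb, div_mul_cancel₀ _ hlog2pos.ne']
  rw [← Real.exp_log (by linarith : 0 < m), ← Real.exp_log (pow_pos (by linarith) _),
    Real.exp_lt_exp, Real.log_pow, hm_log]
  nlinarith

section routing

variable {W : Type*}

lemma exists_isPath_of_walk_deleteEdges {G : SimpleGraph W} {F : Set (Sym2 W)} {a b : W}
    (w : (G.deleteEdges F).Walk a b) :
    ∃ p : G.Walk a b, p.IsPath ∧ p.length ≤ w.length ∧ ∀ e ∈ p.edges, e ∉ F := by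
  refine ⟨w.bypass.mapLe (deleteEdges_le F), (Walk.isPath_mapLe _).2 w.bypass_isPath, ?_, ?_⟩
  · rw [Walk.length_mapLe]; exact w.length_bypass_le_length
  · intro e he
    rw [Walk.edges_mapLe_eq_edges] at he
    have := (w.bypass.edges_subset_edgeSet he)
    rw [edgeSet_deleteEdges] at this
    exact this.2

def IsMatchingBetween (A B : Finset W) (M : Finset (W × W)) : Prop :=
  (∀ p ∈ M, p.1 ∈ A ∧ p.2 ∈ B) ∧
    ∀ p ∈ M, ∀ q ∈ M, p ≠ q → p.1 ≠ q.1 ∧ p.2 ≠ q.2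

def IsRouting (G : SimpleGraph W) (ℓ : ℕ) {M : Finset (W × W)}
    (P : ∀ p : {x : W × W // x ∈ M}, G.Walk p.1.1 p.1.2) : Prop :=
  (∀ p, (P p).IsPath ∧ (P p).length ≤ ℓ) ∧
    ∀ p q, p ≠ q → ∀ e ∈ (P p).edges, e ∉ (P q).edges

def IsRoutedMatching (G : SimpleGraph W) (A B : Finset W) (ℓ : ℕ) (M : Finset (W × W)) :
    Prop :=
  IsMatchingBetween A B M ∧ ∃ P, IsRouting G ℓ (M := M) P

def routeEdges {G : SimpleGraph W} {M : Finset (W × W)}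
    (P : ∀ p : {x : W × W // x ∈ M}, G.Walk p.1.1 p.1.2) : Finset (Sym2 W) :=
  M.attach.biUnion fun p => (P p).edges.toFinset

lemma card_routeEdges_le {G : SimpleGraph W} {M : Finset (W × W)} {ℓ : ℕ}
    {P : ∀ p : {x : W × W // x ∈ M}, G.Walk p.1.1 p.1.2} (hP : ∀ p, (P p).length ≤ ℓ) :
    #(routeEdges P) ≤ #M * ℓ := by
  refine card_biUnion_le.trans ?_
  rw [← card_attach (s := M)]
  refine sum_le_card_nsmul _ _ _ fun p _ => ?_
  exact (P p).edges.toFinset_card_le.trans ((P p).length_edges ▸ hP p)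

lemma IsMatchingBetween.insert {A B : Finset W} {M : Finset (W × W)} (hM : IsMatchingBetween A B M)
    {a b : W} (ha : a ∈ A \ M.image Prod.fst) (hb : b ∈ B \ M.image Prod.snd) :
    IsMatchingBetween A B (insert (a, b) M) := by
  have hfresh : ∀ q ∈ M, a ≠ q.1 ∧ b ≠ q.2 := fun q hq =>
    ⟨fun h => (mem_sdiff.1 ha).2 (mem_image.2 ⟨q, hq, h.symm⟩),
      fun h => (mem_sdiff.1 hb).2 (mem_image.2 ⟨q, hq, h.symm⟩)⟩
  refine ⟨fun p hp => ?_, fun p hp q hq hpq => ?_⟩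
  · rcases mem_insert.1 hp with rfl | hp
    exacts [⟨(mem_sdiff.1 ha).1, (mem_sdiff.1 hb).1⟩, hM.1 p hp]
  rcases mem_insert.1 hp with rfl | hp <;> rcases mem_insert.1 hq with rfl | hq
  · exact absurd rfl hpq
  · exact hfresh q hq
  · exact ⟨(hfresh p hp).1.symm, (hfresh p hp).2.symm⟩
  · exact hM.2 p hp q hq hpq

lemma IsRouting.exists_insert {G : SimpleGraph W} {ℓ : ℕ} {M : Finset (W × W)}
    {P : ∀ p : {x : W × W // x ∈ M}, G.Walk p.1.1 p.1.2} (hP : IsRouting G ℓ P) {a b : W}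
    {w : G.Walk a b} (hw : w.IsPath ∧ w.length ≤ ℓ)
    (hwP : ∀ e ∈ w.edges, e ∉ routeEdges P) :
    ∃ P' : ∀ p : {x : W × W // x ∈ insert (a, b) M}, G.Walk p.1.1 p.1.2,
      IsRouting G ℓ P' := by
  have hnew : ∀ q : {x // x ∈ insert (a, b) M}, q.1 ∉ M → q.1 = (a, b) :=
    fun q hq => (mem_insert.1 q.2).resolve_right hq
  have hwP' : ∀ p e, e ∈ w.edges → e ∉ (P p).edges := fun p e he hp =>
    hwP e he (mem_biUnion.2 ⟨p, mem_attach _ _, List.mem_toFinset.2 hp⟩)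
  refine ⟨fun q => if h : q.1 ∈ M then P ⟨q.1, h⟩ else
    w.copy (congrArg Prod.fst (hnew q h)).symm (congrArg Prod.snd (hnew q h)).symm, ?_, ?_⟩
  · intro q
    by_cases h : q.1 ∈ M
    · simpa only [dif_pos h] using hP.1 _
    · simpa only [dif_neg h, Walk.isPath_copy, Walk.length_copy] using hw
  · intro q₁ q₂ hq e he
    by_cases h₁ : q₁.1 ∈ M <;> by_cases h₂ : q₂.1 ∈ M <;>
      simp only [h₁, h₂, dite_true, dite_false, Walk.edges_copy] at he ⊢
    · exact hP.2 _ _ (fun h => hq (Subtype.ext (Subtype.mk.inj h))) e he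
    · exact fun h => hwP' _ e h he
    · exact hwP' _ e he
    · exact absurd (Subtype.ext ((hnew q₁ h₁).trans (hnew q₂ h₂).symm)) hq

end routing

lemma card_le_card_sdiff_image_add {α β : Type*} [DecidableEq β] (s : Finset β) (M : Finset α)
    (f : α → β) : #s ≤ #(s \ M.image f) + #M :=
  card_le_card_sdiff_add_card.trans (Nat.add_le_add_left card_image_le _)

lemma exists_max_card_isRoutedMatching (G : SimpleGraph V) (A B : Finset V) (ℓ : ℕ) :
    ∃ M, IsRoutedMatching G A B ℓ M ∧
      ∀ M', IsRoutedMatching G A B ℓ M' → #M' ≤ #M := by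
  have hempty : IsRoutedMatching G A B ℓ ∅ :=
    ⟨by simp [IsMatchingBetween], fun p => absurd p.2 (notMem_empty _),
      fun p => absurd p.2 (notMem_empty _), fun p => absurd p.2 (notMem_empty _)⟩
  obtain ⟨M, hM, hmax⟩ := (univ.filter (IsRoutedMatching G A B ℓ)).exists_max_image card
    ⟨∅, mem_filter.2 ⟨mem_univ _, hempty⟩⟩
  exact ⟨M, (mem_filter.1 hM).2, fun M' h => hmax M' (mem_filter.2 ⟨mem_univ _, h⟩)⟩

lemma disjoint_setBall_of_max_card {G : SimpleGraph V} {A B : Finset V} {ℓ : ℕ}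
    {M : Finset (V × V)} (hM : IsMatchingBetween A B M)
    {P : ∀ p : {x : V × V // x ∈ M}, G.Walk p.1.1 p.1.2} (hP : IsRouting G ℓ P)
    (hmax : ∀ M', IsRoutedMatching G A B ℓ M' → #M' ≤ #M) :
    Disjoint (setBall (G.deleteEdges (routeEdges P)) (A \ M.image Prod.fst) (ℓ / 2))
      (setBall (G.deleteEdges (routeEdges P)) (B \ M.image Prod.snd) (ℓ / 2)) := by
  rw [Finset.disjoint_left]
  intro z hzA hzB
  obtain ⟨a, ha, b, hb, w, hw⟩ := exists_walk_of_mem_setBall_of_mem_setBall hzA hzB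
  obtain ⟨p, hp, hpw, hpF⟩ := exists_isPath_of_walk_deleteEdges w
  have hnew : (a, b) ∉ M := fun h => (mem_sdiff.1 ha).2 (mem_image_of_mem Prod.fst h)
  have := hmax _ ⟨hM.insert ha hb, hP.exists_insert ⟨hp, by omega⟩ fun e he => hpF e he⟩
  rw [card_insert_of_notMem hnew] at this
  omega

lemma exists_two_mul_gvol_setBall_le_of_max_card {G : SimpleGraph V} {A B : Finset V}
    (hcard : #A ≤ #B) {ℓ : ℕ} {M : Finset (V × V)} (hM : IsMatchingBetween A B M)
    {P : ∀ p : {x : V × V // x ∈ M}, G.Walk p.1.1 p.1.2} (hP : IsRouting G ℓ P)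
    (hmax : ∀ M', IsRoutedMatching G A B ℓ M' → #M' ≤ #M) (hM2 : 2 * #M ≤ #A) :
    ∃ S, #A ≤ 2 * #S ∧
      2 * gvol G (setBall (G.deleteEdges (routeEdges P)) S (ℓ / 2)) ≤ gvol G univ := by
  have hA := card_le_card_sdiff_image_add A M Prod.fst
  have hB := card_le_card_sdiff_image_add B M Prod.snd
  have hvol := (gvol_union G (disjoint_setBall_of_max_card hM hP hmax)).symm.trans_le
    (gvol_mono G (subset_univ _))
  by_cases h : 2 * gvol G (setBall (G.deleteEdges (routeEdges P)) (A \ M.image Prod.fst) (ℓ / 2))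
      ≤ gvol G univ
  · exact ⟨A \ M.image Prod.fst, by omega, h⟩
  · exact ⟨B \ M.image Prod.snd, by omega, by omega⟩

lemma exists_sparse_cut_of_card_lt {G : SimpleGraph V} (hm : 2 ≤ edgeCount G)
    (hmin : ∀ v, 1 ≤ gdeg G v) {A B : Finset V} (hcard : #A ≤ #B) {ℓ : ℕ}
    (hℓ : 32 * Real.logb 2 (edgeCount G) ≤ ℓ) {M : Finset (V × V)}
    (hM : IsMatchingBetween A B M)
    {P : ∀ p : {x : V × V // x ∈ M}, G.Walk p.1.1 p.1.2} (hP : IsRouting G ℓ P)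
    (hmax : ∀ M', IsRoutedMatching G A B ℓ M' → #M' ≤ #M)
    (hsmall : (#M : ℝ) < 8 * Real.logb 2 (edgeCount G) / ℓ ^ 2 * #A) :
    ∃ X : Finset V, X.Nonempty ∧ (univ \ X).Nonempty ∧
      (gcut G X : ℝ) ≤ 24 * Real.logb 2 (edgeCount G) / ℓ *
        min (gvol G X : ℝ) (gvol G (univ \ X) : ℝ) := by
  set L := Real.logb 2 (edgeCount G)
  have hL : 1 ≤ L := by
    rw [Real.le_logb_iff_rpow_le one_lt_two (by positivity), Real.rpow_one]
    exact_mod_cast hm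
  have hℓ0 : (0 : ℝ) < ℓ := by linarith
  have hA0 : 0 < #A := by
    exact_mod_cast pos_of_mul_pos_right ((#M).cast_nonneg.trans_lt hsmall) (by positivity)
  have hMℓ : (#M : ℝ) * ℓ < 8 * L / ℓ * #A := by
    calc (#M : ℝ) * ℓ < 8 * L / ℓ ^ 2 * #A * ℓ := mul_lt_mul_of_pos_right hsmall hℓ0
      _ = 8 * L / ℓ * #A := by field_simp
  have hF : (#(routeEdges P) : ℝ) ≤ 8 * L / ℓ * #A := by
    have : (#(routeEdges P) : ℝ) ≤ #M * ℓ := by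
      exact_mod_cast card_routeEdges_le fun p => (hP.1 p).2
    linarith
  have hM2 : 2 * #M ≤ #A := by
    have : 8 * L / ℓ ≤ 1 / 4 := by rw [div_le_iff₀ hℓ0]; linarith
    have : (2 * #M : ℝ) ≤ #A := by nlinarith
    exact_mod_cast this
  obtain ⟨S, hAS, hS⟩ := exists_two_mul_gvol_setBall_le_of_max_card hcard hM hP hmax hM2
  have hAS' : (#A : ℝ) ≤ 2 * #S := by exact_mod_cast hAS
  refine exists_sparse_cut_of_two_mul_gvol_setBall_le hmin (routeEdges P)
    (card_pos.1 (by omega)) (β := 16 * L / ℓ) ?_ ?_ hS ?_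
  · linarith [div_nonneg (by linarith : (0 : ℝ) ≤ 8 * L) hℓ0.le,
      show 24 * L / ℓ = 16 * L / ℓ + 8 * L / ℓ by ring]
  · calc (#(routeEdges P) : ℝ) ≤ 8 * L / ℓ * #A := hF
      _ ≤ 8 * L / ℓ * (2 * #S) := by gcongr
      _ = 16 * L / ℓ * #S := by ring
  · have hgrowth := lt_one_add_div_pow_half (m := edgeCount G) (by exact_mod_cast hm) hℓ
    rw [gvol_univ, show 24 * L / ℓ - 16 * L / ℓ = 8 * L / ℓ by ring]
    push_cast
    linarith

theorem statement11_general (G : SimpleGraph V) (hm : 2 ≤ edgeCount G)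
    (hmin : ∀ v : V, 1 ≤ gdeg G v)
    (A B : Finset V) (hcard : A.card ≤ B.card)
    (ℓ : ℕ) (hℓ : 32 * Real.logb 2 (edgeCount G) ≤ (ℓ : ℝ)) :
    (∃ M : Finset (V × V),
      (∀ p ∈ M, p.1 ∈ A ∧ p.2 ∈ B) ∧
      (∀ p ∈ M, ∀ q ∈ M, p ≠ q → p.1 ≠ q.1 ∧ p.2 ≠ q.2) ∧
      8 * Real.logb 2 (edgeCount G) / (ℓ : ℝ) ^ 2 * (A.card : ℝ) ≤ (M.card : ℝ) ∧
      ∃ P : ∀ p : {x : V × V // x ∈ M}, G.Walk p.1.1 p.1.2,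
        (∀ p, (P p).IsPath ∧ (P p).length ≤ ℓ) ∧
        (∀ p q, p ≠ q → ∀ e ∈ (P p).edges, e ∉ (P q).edges)) ∨
    (∃ X : Finset V, X.Nonempty ∧ (Finset.univ \ X).Nonempty ∧
      (gcut G X : ℝ) ≤ 24 * Real.logb 2 (edgeCount G) / (ℓ : ℝ) *
        min (gvol G X : ℝ) (gvol G (Finset.univ \ X) : ℝ)) := by
  obtain ⟨M, ⟨hM, P, hP⟩, hmax⟩ := exists_max_card_isRoutedMatching G A B ℓ
  by_cases hbig :
      8 * Real.logb 2 (edgeCount G) / (ℓ : ℝ) ^ 2 * (A.card : ℝ) ≤ (M.card : ℝ)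
  · exact Or.inl ⟨M, hM.1, hM.2, hbig, P, hP.1, hP.2⟩
  · exact Or.inr (exists_sparse_cut_of_card_lt hm hmin hcard hℓ hM hP hmax (not_le.1 hbig))

/-- Either a large matching between `A` and `B`, embedded by pairwise
edge-disjoint paths of length at most `ℓ`, or a sparse cut. -/
theorem statement11 (G : SimpleGraph V) (hm : 2 ≤ edgeCount G)
    (hmin : ∀ v : V, 1 ≤ gdeg G v)
    (A B : Finset V) (hAB : Disjoint A B) (hcard : A.card ≤ B.card)
    (ℓ : ℕ) (hℓ : 32 * Real.logb 2 (edgeCount G) ≤ (ℓ : ℝ)) :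
    (∃ M : Finset (V × V),
      (∀ p ∈ M, p.1 ∈ A ∧ p.2 ∈ B) ∧
      (∀ p ∈ M, ∀ q ∈ M, p ≠ q → p.1 ≠ q.1 ∧ p.2 ≠ q.2) ∧
      8 * Real.logb 2 (edgeCount G) / (ℓ : ℝ) ^ 2 * (A.card : ℝ) ≤ (M.card : ℝ) ∧
      ∃ P : ∀ p : {x : V × V // x ∈ M}, G.Walk p.1.1 p.1.2,
        (∀ p, (P p).IsPath ∧ (P p).length ≤ ℓ) ∧
        (∀ p q, p ≠ q → ∀ e ∈ (P p).edges, e ∉ (P q).edges)) ∨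
    (∃ X : Finset V, X.Nonempty ∧ (Finset.univ \ X).Nonempty ∧
      (gcut G X : ℝ) ≤ 24 * Real.logb 2 (edgeCount G) / (ℓ : ℝ) *
        min (gvol G X : ℝ) (gvol G (Finset.univ \ X) : ℝ)) :=
  statement11_general G hm hmin A B hcard ℓ hℓ
end
end
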